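/- arXiv:2005.05564 — 4 statements merged into one kernel-verified Lean document; each statement's English description precedes it below -/
import Mathlib

section
/- Let G = (A ∪ B, E) be a biregular bipartite graph with parts A and B, each vertex of A having degree a and each vertex of B having degree b (so a|A| = b|B|). Then for all X ⊆ A and Y ⊆ B, the number of edges e(X,Y) between X and Y satisfies |e(X,Y) - (a/|B|)|X||Y|| ≤ λ₃ √(|X||Y|), where λ₃ is the third largest absolute value of an eigenvalue of the adjacency matrix of G. -/
/-- The adjacency matrix (with real entries) of a bipartite graph with parts `α`, `β`
and adjacency relation `Adj`, as a matrix indexed by `α ⊕ β`. -/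
def bipartiteAdjMatrix {α β : Type*} (Adj : α → β → Prop)
    [∀ x y, Decidable (Adj x y)] :
    Matrix (α ⊕ β) (α ⊕ β) ℝ :=
  fun i j =>
    match i, j with
    | Sum.inl x, Sum.inr y => if Adj x y then 1 else 0
    | Sum.inr y, Sum.inl x => if Adj x y then 1 else 0
    | _, _ => 0

open Matrix Finset


lemma planeOrth {p q s t xx yy : ℝ} (h01 : p*s + q*t = 0) (h02 : p*xx + q*yy = 0)
    (h12 : s*xx + t*yy = 0) (h0 : p*p + q*q ≠ 0) (h1 : s*s + t*t ≠ 0) :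
    xx = 0 ∧ yy = 0 := by
  have hdet : s*yy - t*xx = 0 := by
    have hp : p * (s*yy - t*xx) = 0 := by linear_combination yy*h01 - t*h02
    have hq : q * (s*yy - t*xx) = 0 := by linear_combination s*h02 - xx*h01
    rcases mul_eq_zero.1 hp with hp0 | h
    · rcases mul_eq_zero.1 hq with hq0 | h
      · exact absurd (by rw [hp0, hq0]; ring) h0
      · exact h
    · exact h
  constructor
  · have h : xx * (s*s + t*t) = 0 := by linear_combination s*h12 - t*hdet
    exact (mul_eq_zero.1 h).resolve_right h1
  · have h : yy * (s*s + t*t) = 0 := by linear_combination t*h12 + s*hdet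
    exact (mul_eq_zero.1 h).resolve_right h1

theorem core {n : Type*} [Fintype n] [DecidableEq n] (M : Matrix n n ℝ) (hM : M.IsHermitian)
    (e : Fin (Fintype.card n) ≃ n)
    (hmono : Antitone fun i : Fin (Fintype.card n) => |hM.eigenvalues (e i)|)
    (hthree : 2 < Fintype.card n) (lam3 lam1 : ℝ)
    (hl3 : lam3 = |hM.eigenvalues (e ⟨2, hthree⟩)|)
    (hbound : ∀ i, |hM.eigenvalues i| ≤ lam1)
    (u v x y : n → ℝ)
    (hu1 : u ⬝ᵥ u = 1) (hv1 : v ⬝ᵥ v = 1) (huv : u ⬝ᵥ v = 0)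
    (hMu : M *ᵥ u = lam1 • u) (hMv : M *ᵥ v = (-lam1) • v) :
    |x ⬝ᵥ (M *ᵥ y) - lam1 * (u ⬝ᵥ x) * (u ⬝ᵥ y) + lam1 * (v ⬝ᵥ x) * (v ⬝ᵥ y)|
      ≤ lam3 * Real.sqrt ((x ⬝ᵥ x) * (y ⬝ᵥ y)) := by
  classical
  set w : n → n → ℝ := fun i => ⇑(hM.eigenvectorBasis i) with hw
  set μ : n → ℝ := hM.eigenvalues with hμ
  have hdotnn : ∀ z : n → ℝ, 0 ≤ z ⬝ᵥ z := fun z => Finset.sum_nonneg fun i _ => mul_self_nonneg _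
  have hMt : Mᵀ = M := by
    ext i j
    have := congrFun (congrFun hM i) j
    simpa [Matrix.conjTranspose_apply] using this
  have hsym : ∀ (z t : n → ℝ), z ⬝ᵥ (M *ᵥ t) = (M *ᵥ z) ⬝ᵥ t := by
    intro z t
    rw [Matrix.dotProduct_mulVec, ← Matrix.mulVec_transpose, hMt]
  have heig : ∀ i, M *ᵥ w i = μ i • w i := fun i => hM.mulVec_eigenvectorBasis i
  have hpars : ∀ (z t : n → ℝ), ∑ i, (w i ⬝ᵥ z) * (w i ⬝ᵥ t) = z ⬝ᵥ t := by
    intro z t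
    have h := hM.eigenvectorBasis.sum_inner_mul_inner ((WithLp.equiv 2 _).symm z)
      ((WithLp.equiv 2 _).symm t)
    simp only [PiLp.inner_apply, RCLike.inner_apply, conj_trivial,
      WithLp.equiv_symm_apply, PiLp.toLp_apply] at h
    simpa [dotProduct, mul_comm] using h
  have heorth : ∀ (z : n → ℝ) (ν : ℝ), M *ᵥ z = ν • z → ∀ i, μ i ≠ ν → w i ⬝ᵥ z = 0 := by
    intro z ν hz i hne
    have h1 : w i ⬝ᵥ (M *ᵥ z) = ν * (w i ⬝ᵥ z) := by
      rw [hz]; simp [dotProduct_smul]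
    have h2 : w i ⬝ᵥ (M *ᵥ z) = μ i * (w i ⬝ᵥ z) := by
      rw [hsym, heig]; simp [smul_dotProduct]
    have h3 : (μ i - ν) * (w i ⬝ᵥ z) = 0 := by
      have h4 := h2.symm.trans h1
      linear_combination h4
    exact (mul_eq_zero.1 h3).resolve_left (sub_ne_zero.mpr hne)
  have hexpand : ∀ (z t : n → ℝ), z ⬝ᵥ (M *ᵥ t) = ∑ i, μ i * (w i ⬝ᵥ z) * (w i ⬝ᵥ t) := by
    intro z t
    rw [← hpars z (M *ᵥ t)]
    refine Finset.sum_congr rfl fun i _ => ?_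
    have hiM : w i ⬝ᵥ (M *ᵥ t) = μ i * (w i ⬝ᵥ t) := by
      rw [hsym, heig]; simp [smul_dotProduct]
    rw [hiM]; ring
  have hl3nn : 0 ≤ lam3 := hl3 ▸ abs_nonneg _
  have h0lt : 0 < Fintype.card n := by omega
  have h1lt : 1 < Fintype.card n := by omega
  set E0 : Fin (Fintype.card n) := ⟨0, h0lt⟩ with hE0
  set E1 : Fin (Fintype.card n) := ⟨1, h1lt⟩ with hE1
  set E2 : Fin (Fintype.card n) := ⟨2, hthree⟩ with hE2
  have hmax : ∀ i : n, lam3 < |μ i| → i = e E0 ∨ i = e E1 := by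
    intro i hi
    obtain ⟨k, hk⟩ := e.surjective i
    by_contra hcon
    push_neg at hcon
    have hkval : 2 ≤ k.val := by
      by_contra h2
      push_neg at h2
      have h0 : k = E0 ∨ k = E1 := by
        have hk01 : k.val = 0 ∨ k.val = 1 := by omega
        rcases hk01 with h | h
        · exact Or.inl (Fin.ext h)
        · exact Or.inr (Fin.ext h)
      rcases h0 with h | h
      · exact hcon.1 (by rw [← hk, h])
      · exact hcon.2 (by rw [← hk, h])
    have hle := hmono (show E2 ≤ k from by rw [Fin.le_def]; exact hkval)
    simp only [hk] at hle
    rw [← hl3] at hle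
    exact absurd hle (not_le.mpr hi)
  have hnonzero_exists : ∀ (z : n → ℝ) (ν : ℝ), M *ᵥ z = ν • z → z ⬝ᵥ z = 1 →
      ∃ i, μ i = ν := by
    intro z ν hz hz1
    by_contra hno
    push_neg at hno
    have hall : ∀ i, w i ⬝ᵥ z = 0 := fun i => heorth z ν hz i (hno i)
    have h := hpars z z
    rw [hz1] at h
    simp [hall] at h
  set cu := u ⬝ᵥ x with hcu
  set cv := v ⬝ᵥ x with hcv
  set du := u ⬝ᵥ y with hdu
  set dv := v ⬝ᵥ y with hdv
  set x' : n → ℝ := x - cu • u - cv • v with hx'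
  set y' : n → ℝ := y - du • u - dv • v with hy'
  have hvu : v ⬝ᵥ u = 0 := by rw [dotProduct_comm]; exact huv
  have hux' : u ⬝ᵥ x' = 0 := by
    rw [hx', dotProduct_sub, dotProduct_sub, dotProduct_smul,
      dotProduct_smul, hu1, huv, ← hcu]
    simp
  have hvx' : v ⬝ᵥ x' = 0 := by
    rw [hx', dotProduct_sub, dotProduct_sub, dotProduct_smul,
      dotProduct_smul, hv1, hvu, ← hcv]
    simp
  have huy' : u ⬝ᵥ y' = 0 := by
    rw [hy', dotProduct_sub, dotProduct_sub, dotProduct_smul,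
      dotProduct_smul, hu1, huv, ← hdu]
    simp
  have hvy' : v ⬝ᵥ y' = 0 := by
    rw [hy', dotProduct_sub, dotProduct_sub, dotProduct_smul,
      dotProduct_smul, hv1, hvu, ← hdv]
    simp
  have hx'u : x' ⬝ᵥ u = 0 := by rw [dotProduct_comm]; exact hux'
  have hx'v : x' ⬝ᵥ v = 0 := by rw [dotProduct_comm]; exact hvx'
  have hMy' : M *ᵥ y' = (M *ᵥ y) - (lam1 * du) • u + (lam1 * dv) • v := by
    rw [hy', Matrix.mulVec_sub, Matrix.mulVec_sub, Matrix.mulVec_smul, Matrix.mulVec_smul,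
      hMu, hMv]
    ext k
    simp [smul_smul]
    ring
  have hkey : x ⬝ᵥ (M *ᵥ y) - lam1 * cu * du + lam1 * cv * dv = x' ⬝ᵥ (M *ᵥ y') := by
    have huMy : u ⬝ᵥ (M *ᵥ y) = lam1 * du := by
      rw [hsym, hMu, smul_dotProduct, ← hdu]; simp
    have hvMy : v ⬝ᵥ (M *ᵥ y) = -(lam1 * dv) := by
      rw [hsym, hMv, smul_dotProduct, ← hdv]; simp
    rw [hMy', dotProduct_add, dotProduct_sub, dotProduct_smul,
      dotProduct_smul, hx'u, hx'v, hx', sub_dotProduct, sub_dotProduct,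
      smul_dotProduct, smul_dotProduct, huMy, hvMy]
    simp
    ring
  have hterm : ∀ i, |μ i * (w i ⬝ᵥ x') * (w i ⬝ᵥ y')| ≤ lam3 * (|w i ⬝ᵥ x'| * |w i ⬝ᵥ y'|) := by
    intro i
    rcases le_or_gt |μ i| lam3 with hcase | hcase
    · calc |μ i * (w i ⬝ᵥ x') * (w i ⬝ᵥ y')| = |μ i| * (|w i ⬝ᵥ x'| * |w i ⬝ᵥ y'|) := by
            rw [abs_mul, abs_mul, mul_assoc]
        _ ≤ lam3 * (|w i ⬝ᵥ x'| * |w i ⬝ᵥ y'|) :=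
            mul_le_mul_of_nonneg_right hcase (mul_nonneg (abs_nonneg _) (abs_nonneg _))
    · have h31 : lam3 < lam1 := lt_of_lt_of_le hcase (hbound i)
      have hlam1pos : 0 < lam1 := lt_of_le_of_lt hl3nn h31
      suffices hc : w i ⬝ᵥ x' = 0 by
        rw [hc]
        simp [mul_nonneg hl3nn (mul_nonneg (abs_nonneg _) (abs_nonneg _))]
      obtain ⟨i₁, hi₁⟩ := hnonzero_exists u lam1 hMu hu1
      obtain ⟨i₂, hi₂⟩ := hnonzero_exists v (-lam1) hMv hv1
      have hne12 : i₁ ≠ i₂ := by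
        intro hcontra
        rw [hcontra, hi₂] at hi₁
        linarith
      have h2nd : lam1 ≤ |μ (e E1)| := by
        have hk12 : e.symm i₁ ≠ e.symm i₂ := fun hc => hne12 (e.symm.injective hc)
        have hone : 1 ≤ (e.symm i₁).val ∨ 1 ≤ (e.symm i₂).val := by
          by_contra hno
          push_neg at hno
          exact hk12 (Fin.ext (by omega))
        rcases hone with h1 | h1
        · have hh := hmono (show E1 ≤ e.symm i₁ from by rw [Fin.le_def]; exact h1)
          simp only [Equiv.apply_symm_apply] at hh
          rw [hi₁, abs_of_nonneg hlam1pos.le] at hh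
          exact hh
        · have hh := hmono (show E1 ≤ e.symm i₂ from by rw [Fin.le_def]; exact h1)
          simp only [Equiv.apply_symm_apply] at hh
          rw [hi₂, abs_neg, abs_of_nonneg hlam1pos.le] at hh
          exact hh
      have habs : |μ i| = lam1 := by
        refine le_antisymm (hbound i) ?_
        rcases hmax i hcase with h0 | h0
        · rw [h0]
          exact le_trans h2nd (hmono (show E0 ≤ E1 from by rw [Fin.le_def]; exact Nat.zero_le _))
        · rw [h0]; exact h2nd
      have hvan : ∀ (zz : n → ℝ) (νz : ℝ), |νz| = lam1 → M *ᵥ zz = νz • zz →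
          ∀ j, j ≠ e E0 → j ≠ e E1 → w j ⬝ᵥ zz = 0 := by
        intro zz νz hνz hzz j hj0 hj1
        have hj : ¬ lam3 < |μ j| := by
          intro hcj
          rcases hmax j hcj with hh | hh
          · exact hj0 hh
          · exact hj1 hh
        push_neg at hj
        refine heorth zz νz hzz j ?_
        intro hcj
        rw [hcj, hνz] at hj
        exact absurd hj (not_le.mpr h31)
      have hE0ne : e E0 ≠ e E1 := by
        intro hc
        have hcc := e.injective hc
        rw [hE0, hE1, Fin.mk.injEq] at hcc
        norm_num at hcc
      have hpair : ∀ (z₁ z₂ : n → ℝ),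
          (∀ j, j ≠ e E0 → j ≠ e E1 → w j ⬝ᵥ z₁ = 0) →
          z₁ ⬝ᵥ z₂ = (w (e E0) ⬝ᵥ z₁) * (w (e E0) ⬝ᵥ z₂)
            + (w (e E1) ⬝ᵥ z₁) * (w (e E1) ⬝ᵥ z₂) := by
        intro z₁ z₂ hvan₁
        rw [← hpars z₁ z₂]
        rw [← Finset.sum_subset (Finset.subset_univ ({e E0, e E1} : Finset n))]
        · rw [Finset.sum_insert (by simp [hE0ne]), Finset.sum_singleton]
        · intro j _ hj
          simp only [Finset.mem_insert, Finset.mem_singleton, not_or] at hj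
          rw [hvan₁ j hj.1 hj.2, zero_mul]
      have habs1 : |lam1| = lam1 := abs_of_nonneg hlam1pos.le
      have habsm1 : |(-lam1)| = lam1 := by rw [abs_neg]; exact habs1
      rcases (abs_eq hlam1pos.le).mp habs with hμi | hμi
      · -- μ i = lam1
        have hwv : w i ⬝ᵥ v = 0 := heorth v (-lam1) hMv i (by rw [hμi]; intro hc; linarith)
        set z : n → ℝ := w i - (w i ⬝ᵥ u) • u with hz
        have hzeig : M *ᵥ z = lam1 • z := by
          rw [hz, Matrix.mulVec_sub, Matrix.mulVec_smul, heig i, hμi, hMu]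
          ext k
          simp [smul_smul]
          ring
        have huz : u ⬝ᵥ z = 0 := by
          rw [hz, dotProduct_sub, dotProduct_smul, hu1,
            dotProduct_comm u (w i)]
          simp
        have hvz : v ⬝ᵥ z = 0 := by
          rw [hz, dotProduct_sub, dotProduct_smul, hvu,
            dotProduct_comm v (w i), hwv]
          simp
        by_cases hz0 : z = 0
        · have hwi : w i = (w i ⬝ᵥ u) • u := sub_eq_zero.mp (hz ▸ hz0)
          rw [hwi, smul_dotProduct, hux']
          simp
        · exfalso
          have hzz : z ⬝ᵥ z ≠ 0 := fun hc => hz0 (dotProduct_self_eq_zero.mp hc)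
          have hvanu := hvan u lam1 habs1 hMu
          have hvanv := hvan v (-lam1) habsm1 hMv
          have hvanz := hvan z lam1 habs1 hzeig
          have h01 := hpair u v hvanu
          rw [huv] at h01
          have h02 := hpair u z hvanu
          rw [huz] at h02
          have h12 := hpair v z hvanv
          rw [hvz] at h12
          have hn0 := hpair u u hvanu
          rw [hu1] at hn0
          have hn1 := hpair v v hvanv
          rw [hv1] at hn1
          obtain ⟨hxx, hyy⟩ := planeOrth h01.symm h02.symm h12.symm
            (by rw [← hn0]; norm_num) (by rw [← hn1]; norm_num)
          have hzzz := hpair z z hvanz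
          rw [hxx, hyy] at hzzz
          simp at hzzz
          exact hz0 hzzz
      · -- μ i = -lam1
        have hwu : w i ⬝ᵥ u = 0 := heorth u lam1 hMu i (by rw [hμi]; intro hc; linarith)
        set z : n → ℝ := w i - (w i ⬝ᵥ v) • v with hz
        have hzeig : M *ᵥ z = (-lam1) • z := by
          rw [hz, Matrix.mulVec_sub, Matrix.mulVec_smul, heig i, hμi, hMv]
          ext k
          simp [smul_smul]
          ring
        have hvz : v ⬝ᵥ z = 0 := by
          rw [hz, dotProduct_sub, dotProduct_smul, hv1,
            dotProduct_comm v (w i)]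
          simp
        have huz : u ⬝ᵥ z = 0 := by
          rw [hz, dotProduct_sub, dotProduct_smul, huv,
            dotProduct_comm u (w i), hwu]
          simp
        by_cases hz0 : z = 0
        · have hwi : w i = (w i ⬝ᵥ v) • v := sub_eq_zero.mp (hz ▸ hz0)
          rw [hwi, smul_dotProduct, hvx']
          simp
        · exfalso
          have hzz : z ⬝ᵥ z ≠ 0 := fun hc => hz0 (dotProduct_self_eq_zero.mp hc)
          have hvanu := hvan u lam1 habs1 hMu
          have hvanv := hvan v (-lam1) habsm1 hMv
          have hvanz := hvan z (-lam1) habsm1 hzeig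
          have h01 := hpair u v hvanu
          rw [huv] at h01
          have h02 := hpair u z hvanu
          rw [huz] at h02
          have h12 := hpair v z hvanv
          rw [hvz] at h12
          have hn0 := hpair u u hvanu
          rw [hu1] at hn0
          have hn1 := hpair v v hvanv
          rw [hv1] at hn1
          obtain ⟨hxx, hyy⟩ := planeOrth h01.symm h02.symm h12.symm
            (by rw [← hn0]; norm_num) (by rw [← hn1]; norm_num)
          have hzzz := hpair z z hvanz
          rw [hxx, hyy] at hzzz
          simp at hzzz
          exact hz0 hzzz
  -- norms shrink
  have hshrink : ∀ (zz : n → ℝ), zz ⬝ᵥ u = 0 → zz ⬝ᵥ v = 0 → ∀ (t : n → ℝ) (c d : ℝ),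
      zz ⬝ᵥ (t - c • u - d • v) = zz ⬝ᵥ t := by
    intro zz h1 h2 t c d
    rw [dotProduct_sub, dotProduct_sub, dotProduct_smul,
      dotProduct_smul, h1, h2]
    simp
  have hy'u : y' ⬝ᵥ u = 0 := by rw [dotProduct_comm]; exact huy'
  have hy'v : y' ⬝ᵥ v = 0 := by rw [dotProduct_comm]; exact hvy'
  have hx'norm : x' ⬝ᵥ x' ≤ x ⬝ᵥ x := by
    have hA : x' ⬝ᵥ x' = x' ⬝ᵥ x := by
      have hstep : x' ⬝ᵥ x' = x' ⬝ᵥ (x - cu • u - cv • v) := by rw [← hx']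
      rw [hstep, hshrink x' hx'u hx'v x cu cv]
    have hB : x' ⬝ᵥ x = x ⬝ᵥ x - cu * cu - cv * cv := by
      rw [hx', sub_dotProduct, sub_dotProduct, smul_dotProduct,
        smul_dotProduct, ← hcu, ← hcv]
      simp [smul_eq_mul]
    rw [hA, hB]
    exact le_trans (sub_le_self _ (mul_self_nonneg cv)) (sub_le_self _ (mul_self_nonneg cu))
  have hy'norm : y' ⬝ᵥ y' ≤ y ⬝ᵥ y := by
    have hA : y' ⬝ᵥ y' = y' ⬝ᵥ y := by
      have hstep : y' ⬝ᵥ y' = y' ⬝ᵥ (y - du • u - dv • v) := by rw [← hy']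
      rw [hstep, hshrink y' hy'u hy'v y du dv]
    have hB : y' ⬝ᵥ y = y ⬝ᵥ y - du * du - dv * dv := by
      rw [hy', sub_dotProduct, sub_dotProduct, smul_dotProduct,
        smul_dotProduct, ← hdu, ← hdv]
      simp [smul_eq_mul]
    rw [hA, hB]
    exact le_trans (sub_le_self _ (mul_self_nonneg dv)) (sub_le_self _ (mul_self_nonneg du))
  have hsumx : ∑ i, |w i ⬝ᵥ x'| ^ 2 = x' ⬝ᵥ x' := by
    rw [← hpars x' x']
    exact Finset.sum_congr rfl fun i _ => by rw [sq_abs]; ring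
  have hsumy : ∑ i, |w i ⬝ᵥ y'| ^ 2 = y' ⬝ᵥ y' := by
    rw [← hpars y' y']
    exact Finset.sum_congr rfl fun i _ => by rw [sq_abs]; ring
  rw [hkey, hexpand x' y']
  calc |∑ i, μ i * (w i ⬝ᵥ x') * (w i ⬝ᵥ y')|
      ≤ ∑ i, |μ i * (w i ⬝ᵥ x') * (w i ⬝ᵥ y')| := Finset.abs_sum_le_sum_abs _ _
    _ ≤ ∑ i, lam3 * (|w i ⬝ᵥ x'| * |w i ⬝ᵥ y'|) := Finset.sum_le_sum fun i _ => hterm i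
    _ = lam3 * ∑ i, |w i ⬝ᵥ x'| * |w i ⬝ᵥ y'| := by rw [← Finset.mul_sum]
    _ ≤ lam3 * (Real.sqrt (∑ i, |w i ⬝ᵥ x'| ^ 2) * Real.sqrt (∑ i, |w i ⬝ᵥ y'| ^ 2)) :=
        mul_le_mul_of_nonneg_left (Real.sum_mul_le_sqrt_mul_sqrt _ _ _) hl3nn
    _ = lam3 * (Real.sqrt (x' ⬝ᵥ x') * Real.sqrt (y' ⬝ᵥ y')) := by rw [hsumx, hsumy]
    _ ≤ lam3 * (Real.sqrt (x ⬝ᵥ x) * Real.sqrt (y ⬝ᵥ y)) := by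
        refine mul_le_mul_of_nonneg_left ?_ hl3nn
        exact mul_le_mul (Real.sqrt_le_sqrt hx'norm) (Real.sqrt_le_sqrt hy'norm)
          (Real.sqrt_nonneg _) (Real.sqrt_nonneg _)
    _ = lam3 * Real.sqrt ((x ⬝ᵥ x) * (y ⬝ᵥ y)) := by rw [Real.sqrt_mul (hdotnn x)]

/-- Expander mixing lemma for biregular bipartite graphs. -/
theorem stmt_7 {α β : Type*} [Fintype α] [Fintype β] [DecidableEq α] [DecidableEq β]
    (Adj : α → β → Prop) [∀ x y, Decidable (Adj x y)]
    (a b : ℕ)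
    (hdegA : ∀ x : α, (Finset.univ.filter fun y : β => Adj x y).card = a)
    (hdegB : ∀ y : β, (Finset.univ.filter fun x : α => Adj x y).card = b)
    (hH : (bipartiteAdjMatrix Adj).IsHermitian)
    -- an enumeration of the eigenvalues in decreasing order of absolute value
    (e : Fin (Fintype.card (α ⊕ β)) ≃ (α ⊕ β))
    (hmono : Antitone fun i : Fin (Fintype.card (α ⊕ β)) => |hH.eigenvalues (e i)|)
    (hthree : 2 < Fintype.card (α ⊕ β))
    (lambda3 : ℝ)
    (hl3 : lambda3 = |hH.eigenvalues (e ⟨2, hthree⟩)|)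
    (X : Finset α) (Y : Finset β) :
    |(((X ×ˢ Y).filter fun p => Adj p.1 p.2).card : ℝ)
        - (a / Fintype.card β) * X.card * Y.card|
      ≤ lambda3 * Real.sqrt (X.card * Y.card) := by
  classical
  have hl3nn : 0 ≤ lambda3 := hl3 ▸ abs_nonneg _
  rcases Finset.eq_empty_or_nonempty X with hX | hX
  · subst hX
    simp only [Finset.empty_product, Finset.filter_empty, Finset.card_empty, Nat.cast_zero,
      mul_zero, zero_mul, sub_zero, abs_zero]
    positivity
  rcases Finset.eq_empty_or_nonempty Y with hY | hY
  · subst hY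
    simp only [Finset.product_empty, Finset.filter_empty, Finset.card_empty, Nat.cast_zero,
      mul_zero, sub_zero, abs_zero]
    positivity
  obtain ⟨x0, hx0⟩ := hX
  obtain ⟨y0, hy0⟩ := hY
  have hαne : Nonempty α := ⟨x0⟩
  have hβne : Nonempty β := ⟨y0⟩
  have hαpos : 0 < Fintype.card α := Fintype.card_pos
  have hβpos : 0 < Fintype.card β := Fintype.card_pos
  -- double counting
  have hAB : a * Fintype.card α = b * Fintype.card β := by
    have h1 : ∑ x : α, ((univ.filter fun y : β => Adj x y).card) = a * Fintype.card α := by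
      simp [hdegA, Finset.sum_const, Finset.card_univ, mul_comm]
    have h2 : ∑ y : β, ((univ.filter fun x : α => Adj x y).card) = b * Fintype.card β := by
      simp [hdegB, Finset.sum_const, Finset.card_univ, mul_comm]
    rw [← h1, ← h2]
    simp only [Finset.card_filter]
    rw [Finset.sum_comm]
  -- degenerate degree zero case
  by_cases ha : a = 0
  · have hnoedge : ((X ×ˢ Y).filter fun p => Adj p.1 p.2) = ∅ := by
      rw [Finset.filter_eq_empty_iff]
      rintro ⟨x, y⟩ hxy hadj
      have h1 := hdegA x
      rw [ha, Finset.card_eq_zero] at h1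
      have h2 : y ∈ (univ.filter fun y : β => Adj x y) := by simp [hadj]
      rw [h1] at h2
      exact absurd h2 (Finset.notMem_empty _)
    rw [hnoedge, ha]
    simp only [Finset.card_empty, Nat.cast_zero, zero_div, zero_mul, sub_zero, abs_zero]
    exact mul_nonneg hl3nn (Real.sqrt_nonneg _)
  have hb : b ≠ 0 := by
    intro hb0
    rw [hb0, zero_mul] at hAB
    rcases Nat.mul_eq_zero.mp hAB with h | h
    · exact ha h
    · omega
  -- main case
  set M := bipartiteAdjMatrix Adj with hM
  set aR : ℝ := (a : ℝ) with haR
  set bR : ℝ := (b : ℝ) with hbR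
  set AR : ℝ := (Fintype.card α : ℝ) with hAR
  set BR : ℝ := (Fintype.card β : ℝ) with hBR
  have haRpos : 0 < aR := by rw [haR]; exact_mod_cast Nat.pos_of_ne_zero ha
  have hbRpos : 0 < bR := by rw [hbR]; exact_mod_cast Nat.pos_of_ne_zero hb
  have hARpos : 0 < AR := by rw [hAR]; exact_mod_cast hαpos
  have hBRpos : 0 < BR := by rw [hBR]; exact_mod_cast hβpos
  have hABR : aR * AR = bR * BR := by
    rw [haR, hAR, hbR, hBR]
    exact_mod_cast hAB
  set p : ℝ := (Real.sqrt (2*AR))⁻¹ with hp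
  set q : ℝ := (Real.sqrt (2*BR))⁻¹ with hq
  have hppos : 0 < p := by
    rw [hp]
    exact inv_pos.mpr (Real.sqrt_pos.mpr (by linarith))
  have hqpos : 0 < q := by
    rw [hq]
    exact inv_pos.mpr (Real.sqrt_pos.mpr (by linarith))
  have hp2 : p * p = (2*AR)⁻¹ := by
    rw [hp, ← mul_inv, Real.mul_self_sqrt (by linarith)]
  have hq2 : q * q = (2*BR)⁻¹ := by
    rw [hq, ← mul_inv, Real.mul_self_sqrt (by linarith)]
  set lam1 : ℝ := Real.sqrt (aR*bR) with hlam1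
  set u : α ⊕ β → ℝ := Sum.elim (fun _ => p) (fun _ => q) with hu
  set v : α ⊕ β → ℝ := Sum.elim (fun _ => p) (fun _ => -q) with hv
  set xv : α ⊕ β → ℝ := Sum.elim (fun s => if s ∈ X then (1:ℝ) else 0) (fun _ => 0) with hxv
  set yv : α ⊕ β → ℝ := Sum.elim (fun _ => (0:ℝ)) (fun t => if t ∈ Y then (1:ℝ) else 0) with hyv
  have hsum_iteα : ∀ (P : α → Prop) [DecidablePred P] (c : ℝ),
      (∑ i : α, if P i then c else 0) = ((univ.filter P).card : ℝ) * c := by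
    intro P _ c
    rw [Finset.sum_ite, Finset.sum_const, Finset.sum_const_zero, add_zero, nsmul_eq_mul]
  have hsum_iteβ : ∀ (P : β → Prop) [DecidablePred P] (c : ℝ),
      (∑ i : β, if P i then c else 0) = ((univ.filter P).card : ℝ) * c := by
    intro P _ c
    rw [Finset.sum_ite, Finset.sum_const, Finset.sum_const_zero, add_zero, nsmul_eq_mul]
  -- basic inner products
  have hu1 : u ⬝ᵥ u = 1 := by
    simp only [dotProduct, hu, Fintype.sum_sum_type, Sum.elim_inl, Sum.elim_inr,
      Finset.sum_const, Finset.card_univ, nsmul_eq_mul, ← hAR, ← hBR]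
    rw [hp2, hq2]
    field_simp
    ring
  have hv1 : v ⬝ᵥ v = 1 := by
    simp only [dotProduct, hv, Fintype.sum_sum_type, Sum.elim_inl, Sum.elim_inr,
      Finset.sum_const, Finset.card_univ, nsmul_eq_mul, ← hAR, ← hBR, neg_mul_neg]
    rw [hp2, hq2]
    field_simp
    ring
  have huv : u ⬝ᵥ v = 0 := by
    simp only [dotProduct, hu, hv, Fintype.sum_sum_type, Sum.elim_inl, Sum.elim_inr,
      Finset.sum_const, Finset.card_univ, nsmul_eq_mul, ← hAR, ← hBR, mul_neg]
    rw [hp2, hq2]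
    field_simp
    ring
  -- eigen identities
  have haq : aR * q = lam1 * p := by
    have h1 : aR * q = Real.sqrt (aR^2 * (2*BR)⁻¹) := by
      rw [Real.sqrt_mul (sq_nonneg _), Real.sqrt_sq haRpos.le, Real.sqrt_inv, hq]
    have h2 : lam1 * p = Real.sqrt ((aR*bR) * (2*AR)⁻¹) := by
      rw [Real.sqrt_mul (by positivity), Real.sqrt_inv, hlam1, hp]
    rw [h1, h2]
    congr 1
    field_simp
    linear_combination hABR
  have hbp : bR * p = lam1 * q := by
    have h1 : bR * p = Real.sqrt (bR^2 * (2*AR)⁻¹) := by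
      rw [Real.sqrt_mul (sq_nonneg _), Real.sqrt_sq hbRpos.le, Real.sqrt_inv, hp]
    have h2 : lam1 * q = Real.sqrt ((aR*bR) * (2*BR)⁻¹) := by
      rw [Real.sqrt_mul (by positivity), Real.sqrt_inv, hlam1, hq]
    rw [h1, h2]
    congr 1
    field_simp
    linear_combination hABR.symm
  have hMu : M *ᵥ u = lam1 • u := by
    ext i
    rcases i with x | y
    · show ∑ j, M (Sum.inl x) j * u j = lam1 * p
      rw [Fintype.sum_sum_type]
      simp only [hM, bipartiteAdjMatrix, hu, Sum.elim_inl, Sum.elim_inr, zero_mul,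
        Finset.sum_const_zero, zero_add, ite_mul, one_mul]
      rw [hsum_iteβ _ q, hdegA x, ← haR]
      exact haq
    · show ∑ j, M (Sum.inr y) j * u j = lam1 * q
      rw [Fintype.sum_sum_type]
      simp only [hM, bipartiteAdjMatrix, hu, Sum.elim_inl, Sum.elim_inr, zero_mul,
        Finset.sum_const_zero, add_zero, ite_mul, one_mul]
      rw [hsum_iteα _ p, hdegB y, ← hbR]
      exact hbp
  have hMv : M *ᵥ v = (-lam1) • v := by
    ext i
    rcases i with x | y
    · show ∑ j, M (Sum.inl x) j * v j = -lam1 * p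
      rw [Fintype.sum_sum_type]
      simp only [hM, bipartiteAdjMatrix, hv, Sum.elim_inl, Sum.elim_inr, zero_mul,
        Finset.sum_const_zero, zero_add, ite_mul, one_mul]
      rw [hsum_iteβ _ (-q), hdegA x, ← haR]
      linear_combination -haq
    · show ∑ j, M (Sum.inr y) j * v j = -lam1 * -q
      rw [Fintype.sum_sum_type]
      simp only [hM, bipartiteAdjMatrix, hv, Sum.elim_inl, Sum.elim_inr, zero_mul,
        Finset.sum_const_zero, add_zero, ite_mul, one_mul]
      rw [hsum_iteα _ p, hdegB y, ← hbR]
      linear_combination hbp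
  -- entries nonneg and row sums
  have hMnn : ∀ j k, 0 ≤ M j k := by
    intro j k
    rw [hM]
    rcases j with x | y <;> rcases k with x' | y' <;>
      (first | (simp only [bipartiteAdjMatrix]; positivity) | exact le_refl 0)
  have hrowA : ∀ x : α, (∑ k, M (Sum.inl x) k) = aR := by
    intro x
    rw [Fintype.sum_sum_type]
    simp only [hM, bipartiteAdjMatrix, Finset.sum_const_zero, zero_add]
    rw [hsum_iteβ _ 1, hdegA x, ← haR, mul_one]
  have hrowB : ∀ y : β, (∑ k, M (Sum.inr y) k) = bR := by
    intro y
    rw [Fintype.sum_sum_type]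
    simp only [hM, bipartiteAdjMatrix, Finset.sum_const_zero, add_zero]
    rw [hsum_iteα _ 1, hdegB y, ← hbR, mul_one]
  -- eigenvalue bound
  have hbound : ∀ i, |hH.eigenvalues i| ≤ lam1 := by
    intro i
    set wv : α ⊕ β → ℝ := ⇑(hH.eigenvectorBasis i) with hwv
    have heig : M *ᵥ wv = hH.eigenvalues i • wv := hH.mulVec_eigenvectorBasis i
    set μ := hH.eigenvalues i with hμi
    have hwnorm : wv ⬝ᵥ wv = 1 := by
      have h := (orthonormal_iff_ite.mp hH.eigenvectorBasis.orthonormal) i i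
      simp only [if_pos rfl, PiLp.inner_apply, RCLike.inner_apply, conj_trivial] at h
      simpa [dotProduct, mul_comm] using h
    obtain ⟨j, -, hj⟩ := Finset.exists_max_image (univ : Finset (α ⊕ β)) (fun k => |wv k|)
      ⟨Sum.inl x0, Finset.mem_univ _⟩
    have hjpos : 0 < |wv j| := by
      rcases eq_or_lt_of_le (abs_nonneg (wv j)) with h0 | h0
      · exfalso
        have hall : ∀ k, wv k = 0 := by
          intro k
          have hk := hj k (Finset.mem_univ k)
          rw [← h0] at hk
          exact abs_eq_zero.mp (le_antisymm hk (abs_nonneg _))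
        rw [show wv ⬝ᵥ wv = 0 from by simp [dotProduct, hall]] at hwnorm
        norm_num at hwnorm
      · exact h0
    have hMw : ∀ l, |(M *ᵥ wv) l| ≤ (∑ k, M l k) * |wv j| := by
      intro l
      calc |(M *ᵥ wv) l| ≤ ∑ k, |M l k * wv k| := Finset.abs_sum_le_sum_abs _ _
        _ = ∑ k, M l k * |wv k| := Finset.sum_congr rfl fun k _ => by
            rw [abs_mul, abs_of_nonneg (hMnn l k)]
        _ ≤ ∑ k, M l k * |wv j| := Finset.sum_le_sum fun k _ =>
            mul_le_mul_of_nonneg_left (hj k (Finset.mem_univ k)) (hMnn l k)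
        _ = (∑ k, M l k) * |wv j| := by rw [Finset.sum_mul]
    have hlast : ∑ k, M j k * ((∑ m, M k m) * |wv j|) = aR * (bR * |wv j|) := by
      rcases j with x | y
      · rw [Fintype.sum_sum_type]
        have h1 : ∀ x' : α, M (Sum.inl x) (Sum.inl x') * ((∑ m, M (Sum.inl x') m) * |wv (Sum.inl x)|) = 0 := by
          intro x'
          simp [hM, bipartiteAdjMatrix]
        have h2 : ∀ y : β, M (Sum.inl x) (Sum.inr y) * ((∑ m, M (Sum.inr y) m) * |wv (Sum.inl x)|)
            = if Adj x y then bR * |wv (Sum.inl x)| else 0 := by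
          intro y
          rw [hrowB y]
          simp only [hM, bipartiteAdjMatrix, ite_mul, one_mul, zero_mul]
        rw [Finset.sum_congr rfl fun x' _ => h1 x', Finset.sum_congr rfl fun y _ => h2 y,
          Finset.sum_const_zero, zero_add, hsum_iteβ _ _, hdegA x, ← haR]
      · rw [Fintype.sum_sum_type]
        have h1 : ∀ y' : β, M (Sum.inr y) (Sum.inr y') * ((∑ m, M (Sum.inr y') m) * |wv (Sum.inr y)|) = 0 := by
          intro y'
          simp [hM, bipartiteAdjMatrix]
        have h2 : ∀ x : α, M (Sum.inr y) (Sum.inl x) * ((∑ m, M (Sum.inl x) m) * |wv (Sum.inr y)|)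
            = if Adj x y then aR * |wv (Sum.inr y)| else 0 := by
          intro x
          rw [hrowA x]
          simp only [hM, bipartiteAdjMatrix, ite_mul, one_mul, zero_mul]
        rw [Finset.sum_congr rfl fun x _ => h2 x, Finset.sum_congr rfl fun y' _ => h1 y',
          Finset.sum_const_zero, add_zero, hsum_iteα _ _, hdegB y, ← hbR]
        ring
    have hM2 : |(M *ᵥ (M *ᵥ wv)) j| ≤ aR * (bR * |wv j|) := by
      calc |(M *ᵥ (M *ᵥ wv)) j| ≤ ∑ k, |M j k * (M *ᵥ wv) k| := Finset.abs_sum_le_sum_abs _ _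
        _ ≤ ∑ k, M j k * ((∑ m, M k m) * |wv j|) := Finset.sum_le_sum fun k _ => by
            rw [abs_mul, abs_of_nonneg (hMnn j k)]
            exact mul_le_mul_of_nonneg_left (hMw k) (hMnn j k)
        _ = aR * (bR * |wv j|) := hlast
    have hval : (M *ᵥ (M *ᵥ wv)) j = μ * μ * wv j := by
      rw [heig, Matrix.mulVec_smul, heig]
      simp [smul_smul]
      ring
    rw [hval] at hM2
    have habs2 : |μ * μ * wv j| = μ * μ * |wv j| := by
      rw [abs_mul, abs_mul, abs_mul_abs_self]
    rw [habs2] at hM2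
    have hsq : μ * μ ≤ aR * bR := by
      rw [← mul_assoc] at hM2
      exact le_of_mul_le_mul_right hM2 hjpos
    rw [hlam1, ← Real.sqrt_mul_self_eq_abs]
    exact Real.sqrt_le_sqrt hsq
  -- dot products with indicators
  have hxMy : xv ⬝ᵥ (M *ᵥ yv) = (((X ×ˢ Y).filter fun pp => Adj pp.1 pp.2).card : ℝ) := by
    have hMyv : ∀ x : α, (M *ᵥ yv) (Sum.inl x)
        = ∑ t : β, if t ∈ Y then (if Adj x t then (1:ℝ) else 0) else 0 := by
      intro x
      show ∑ jj, M (Sum.inl x) jj * yv jj = _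
      rw [Fintype.sum_sum_type]
      simp only [hM, bipartiteAdjMatrix, hyv, Sum.elim_inl, Sum.elim_inr, mul_zero,
        Finset.sum_const_zero, zero_add]
      exact Finset.sum_congr rfl fun t _ => mul_boole _ _
    rw [dotProduct, Fintype.sum_sum_type]
    simp only [hxv, Sum.elim_inl, Sum.elim_inr, zero_mul, Finset.sum_const_zero, add_zero]
    rw [Finset.sum_congr rfl fun s (_ : s ∈ univ) => by rw [hMyv s, boole_mul]]
    rw [Finset.sum_ite_mem, Finset.univ_inter]
    rw [Finset.sum_congr rfl fun s (_ : s ∈ X) => by rw [Finset.sum_ite_mem, Finset.univ_inter]]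
    rw [Finset.card_filter]
    push_cast
    rw [← Finset.sum_product']
  have hxx : xv ⬝ᵥ xv = (X.card : ℝ) := by
    rw [dotProduct, Fintype.sum_sum_type]
    simp only [hxv, Sum.elim_inl, Sum.elim_inr, mul_zero, Finset.sum_const_zero, add_zero]
    rw [Finset.sum_congr rfl fun s (_ : s ∈ univ) =>
      show (if s ∈ X then (1:ℝ) else 0) * (if s ∈ X then (1:ℝ) else 0)
          = if s ∈ X then (1:ℝ) else 0 from by split <;> norm_num]
    rw [Finset.sum_ite_mem, Finset.univ_inter, Finset.sum_const, nsmul_eq_mul, mul_one]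
  have hyy : yv ⬝ᵥ yv = (Y.card : ℝ) := by
    rw [dotProduct, Fintype.sum_sum_type]
    simp only [hyv, Sum.elim_inl, Sum.elim_inr, mul_zero, Finset.sum_const_zero, zero_add]
    rw [Finset.sum_congr rfl fun t (_ : t ∈ univ) =>
      show (if t ∈ Y then (1:ℝ) else 0) * (if t ∈ Y then (1:ℝ) else 0)
          = if t ∈ Y then (1:ℝ) else 0 from by split <;> norm_num]
    rw [Finset.sum_ite_mem, Finset.univ_inter, Finset.sum_const, nsmul_eq_mul, mul_one]
  have hux : u ⬝ᵥ xv = p * X.card := by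
    rw [dotProduct, Fintype.sum_sum_type]
    simp only [hu, hxv, Sum.elim_inl, Sum.elim_inr, mul_zero, Finset.sum_const_zero, add_zero]
    rw [← Finset.mul_sum, Finset.sum_ite_mem, Finset.univ_inter, Finset.sum_const,
      nsmul_eq_mul, mul_one]
  have hvx : v ⬝ᵥ xv = p * X.card := by
    rw [dotProduct, Fintype.sum_sum_type]
    simp only [hv, hxv, Sum.elim_inl, Sum.elim_inr, mul_zero, Finset.sum_const_zero, add_zero]
    rw [← Finset.mul_sum, Finset.sum_ite_mem, Finset.univ_inter, Finset.sum_const,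
      nsmul_eq_mul, mul_one]
  have huy : u ⬝ᵥ yv = q * Y.card := by
    rw [dotProduct, Fintype.sum_sum_type]
    simp only [hu, hyv, Sum.elim_inl, Sum.elim_inr, mul_zero, Finset.sum_const_zero, zero_add]
    rw [← Finset.mul_sum, Finset.sum_ite_mem, Finset.univ_inter, Finset.sum_const,
      nsmul_eq_mul, mul_one]
  have hvy : v ⬝ᵥ yv = -(q * Y.card) := by
    rw [dotProduct, Fintype.sum_sum_type]
    simp only [hv, hyv, Sum.elim_inl, Sum.elim_inr, mul_zero, Finset.sum_const_zero, zero_add,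
      neg_mul]
    rw [Finset.sum_neg_distrib, ← Finset.mul_sum, Finset.sum_ite_mem, Finset.univ_inter,
      Finset.sum_const, nsmul_eq_mul, mul_one]
  have h2pq : 2 * (lam1 * (p * q)) = aR / BR := by
    have hx1 : Real.sqrt ((aR*bR) * ((2*AR)⁻¹ * (2*BR)⁻¹)) = lam1 * (p * q) := by
      rw [Real.sqrt_mul (by positivity : (0:ℝ) ≤ aR*bR),
        Real.sqrt_mul (by positivity : (0:ℝ) ≤ (2*AR)⁻¹), Real.sqrt_inv, Real.sqrt_inv,
        hlam1, hp, hq]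
    have hx2 : 2 * Real.sqrt ((aR*bR) * ((2*AR)⁻¹ * (2*BR)⁻¹))
        = Real.sqrt (4 * ((aR*bR) * ((2*AR)⁻¹ * (2*BR)⁻¹))) := by
      rw [show (4:ℝ) * ((aR*bR) * ((2*AR)⁻¹ * (2*BR)⁻¹))
            = 2^2 * ((aR*bR) * ((2*AR)⁻¹ * (2*BR)⁻¹)) by norm_num,
        Real.sqrt_mul (by positivity : (0:ℝ) ≤ 2^2),
        Real.sqrt_sq (by norm_num : (0:ℝ) ≤ 2)]
    have hx3 : (4 * ((aR*bR) * ((2*AR)⁻¹ * (2*BR)⁻¹))) = (aR/BR)^2 := by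
      field_simp
      linear_combination -4*hABR
    rw [← hx1, hx2, hx3, Real.sqrt_sq (by positivity)]
  have hcore := core M hH e hmono hthree lambda3 lam1 hl3 hbound u v xv yv hu1 hv1 huv hMu hMv
  rw [hxMy, hux, huy, hvx, hvy, hxx, hyy] at hcore
  have hfin : (((X ×ˢ Y).filter fun pp => Adj pp.1 pp.2).card : ℝ)
      - lam1 * (p * X.card) * (q * Y.card) + lam1 * (p * X.card) * -(q * Y.card)
      = (((X ×ˢ Y).filter fun pp => Adj pp.1 pp.2).card : ℝ) - (aR / BR) * X.card * Y.card := by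
    linear_combination (-(X.card : ℝ) * Y.card) * h2pq
  rw [hfin] at hcore
  exact hcore
end

section
/- Let R be a finite valuation ring of order q^r with residue field of odd size q, and let A ⊆ R with |A| ≥ 2q^{r-1}. Then max{|A+A|, |A²+A²|} ≫ min{ q^{r/2}|A|^{1/2}, |A|²/q^{(2r-1)/2} }, i.e., there is an absolute constant c > 0 with max{|A+A|, |A²+A²|} ≥ c · min{ q^{r/2}|A|^{1/2}, |A|²/q^{(2r-1)/2} }. -/
set_option linter.unusedSectionVars false
set_option maxHeartbeats 1000000

open Finset Pointwise

namespace SP8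

variable {R : Type} [CommRing R] [Fintype R] [DecidableEq R]

lemma delta_sum (χ : AddChar R ℂ) (hχ : ∀ z : R, z ≠ 0 → ∃ lam : R, χ (lam * z) ≠ 1)
    (z : R) : ∑ lam : R, χ (lam * z) = if z = 0 then (Fintype.card R : ℂ) else 0 := by
  split_ifs with h
  · simp [h, Finset.card_univ]
  · obtain ⟨lam, hl⟩ := hχ z h
    have hne : (χ.mulShift z) ≠ 0 := by
      rw [AddChar.ne_zero_iff]
      exact ⟨lam, by rwa [AddChar.mulShift_apply, mul_comm]⟩
    have h0 := AddChar.sum_eq_zero_iff_ne_zero.mpr hne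
    calc ∑ lam : R, χ (lam * z) = ∑ lam : R, (χ.mulShift z) lam := by
          simp [AddChar.mulShift_apply, mul_comm]
      _ = 0 := h0

lemma nilp_of_mem_max [IsLocalRing R] {x : R} (hx : x ∈ IsLocalRing.maximalIdeal R) :
    ∃ n : ℕ, 0 < n ∧ x ^ n = 0 := by
  obtain ⟨i, j, hij, hieq⟩ := Finite.exists_ne_map_eq_of_infinite (fun n : ℕ => x ^ n)
  wlog hlt : i < j generalizing i j
  · exact this j i hij.symm hieq.symm (by omega)
  have h1 : x ^ i * (1 - x ^ (j - i)) = 0 := by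
    rw [mul_sub, mul_one, ← pow_add, Nat.add_sub_cancel' hlt.le, ← hieq, sub_self]
  have hmem : x ^ (j - i) ∈ IsLocalRing.maximalIdeal R := by
    have hne : j - i ≠ 0 := Nat.sub_ne_zero_of_lt hlt
    have : x ^ (j - i) = x ^ (j - i - 1) * x := by
      rw [← pow_succ, Nat.sub_add_cancel (Nat.one_le_iff_ne_zero.mpr hne)]
    rw [this]
    exact Ideal.mul_mem_left _ _ hx
  have hu : IsUnit (1 - x ^ (j - i)) :=
    IsLocalRing.isUnit_one_sub_self_of_mem_nonunits _ ((IsLocalRing.mem_maximalIdeal _).mp hmem)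
  refine ⟨i + 1, Nat.succ_pos _, ?_⟩
  have h2 : x ^ i * (1 - x ^ (j - i)) * ↑hu.unit⁻¹ = 0 := by rw [h1, zero_mul]
  rw [mul_assoc, IsUnit.mul_val_inv, mul_one] at h2
  rw [pow_succ]
  rw [h2, zero_mul]

lemma exists_primitive [IsLocalRing R] [IsPrincipalIdealRing R] [Nontrivial R] :
    ∃ χ : AddChar R ℂ, ∀ z : R, z ≠ 0 → ∃ lam : R, χ (lam * z) ≠ 1 := by
  classical
  obtain ⟨π, hπ⟩ : ∃ π : R, IsLocalRing.maximalIdeal R = Ideal.span {π} := by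
    obtain ⟨π, hπ⟩ := (IsPrincipalIdealRing.principal (IsLocalRing.maximalIdeal R)).principal
    exact ⟨π, by simpa [Ideal.submodule_span_eq] using hπ⟩
  have hπm : π ∈ IsLocalRing.maximalIdeal R := hπ ▸ Ideal.mem_span_singleton_self π
  have hnil : ∃ n : ℕ, π ^ n = 0 := by
    obtain ⟨n, _, hn⟩ := nilp_of_mem_max hπm
    exact ⟨n, hn⟩
  set e := Nat.find hnil with he
  have hee : π ^ e = 0 := Nat.find_spec hnil
  have hepos : 0 < e := by
    rcases Nat.eq_zero_or_pos e with h0 | h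
    · exfalso; rw [h0, pow_zero] at hee; exact one_ne_zero hee
    · exact h
  have hz0 : π ^ (e - 1) ≠ 0 := Nat.find_min hnil (by omega)
  obtain ⟨χ, hχ⟩ : ∃ χ : AddChar R ℂ, χ (π ^ (e - 1)) ≠ 1 :=
    AddChar.exists_apply_ne_zero.mpr hz0
  refine ⟨χ, fun z hz => ?_⟩
  have hex : ∃ n : ℕ, z ∉ Ideal.span {π ^ n} := by
    refine ⟨e, ?_⟩
    rw [hee]
    simpa [Ideal.span_singleton_eq_bot.mpr rfl] using hz
  set n₀ := Nat.find hex with hn₀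
  have hn₀pos : 0 < n₀ := by
    rcases Nat.eq_zero_or_pos n₀ with h0 | h
    · exfalso
      have hsp := Nat.find_spec hex
      rw [← hn₀, h0, pow_zero, Ideal.span_singleton_one] at hsp
      exact hsp trivial
    · exact h
  set k := n₀ - 1 with hk
  have hzk : z ∈ Ideal.span {π ^ k} := by
    by_contra hcon
    have hcc : n₀ ≤ k := Nat.find_le hcon
    omega
  have hznk : z ∉ Ideal.span {π ^ (k + 1)} := by
    have hkn : k + 1 = n₀ := by omega
    rw [hkn]
    exact Nat.find_spec hex
  obtain ⟨c, hc⟩ := Ideal.mem_span_singleton'.mp hzk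
  have hcu : IsUnit c := by
    by_contra hcu
    have hcm : c ∈ IsLocalRing.maximalIdeal R := (IsLocalRing.mem_maximalIdeal _).mpr hcu
    rw [hπ, Ideal.mem_span_singleton'] at hcm
    obtain ⟨c', hc'⟩ := hcm
    apply hznk
    rw [Ideal.mem_span_singleton']
    exact ⟨c', by rw [← hc, ← hc']; ring⟩
  have hkle : k ≤ e - 1 := by
    by_contra hcon
    push_neg at hcon
    apply hz
    rw [← hc]
    have hpk : π ^ k = 0 := by
      have : π ^ k = π ^ e * π ^ (k - e) := by rw [← pow_add]; congr 1; omega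
      rw [this, hee, zero_mul]
    rw [hpk, mul_zero]
  obtain ⟨u, hu⟩ := hcu
  refine ⟨↑u⁻¹ * π ^ (e - 1 - k), ?_⟩
  have heq : (↑u⁻¹ * π ^ (e - 1 - k)) * z = π ^ (e - 1) := by
    rw [← hc, ← hu]
    have h1 : π ^ (e - 1 - k) * π ^ k = π ^ (e - 1) := by
      rw [← pow_add]; congr 1; omega
    calc ↑u⁻¹ * π ^ (e - 1 - k) * (↑u * π ^ k)
        = (↑u⁻¹ * ↑u : R) * (π ^ (e - 1 - k) * π ^ k) := by ring
      _ = π ^ (e - 1) := by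
          rw [h1]
          norm_cast
          simp
  rw [heq]
  exact hχ

lemma sum_normsq (χ : AddChar R ℂ) (hχ : ∀ z : R, z ≠ 0 → ∃ lam : R, χ (lam * z) ≠ 1)
    (T : Finset R) (g : R → R) :
    ∑ lam : R, ‖∑ t ∈ T, χ (lam * g t)‖ ^ 2 =
      (Fintype.card R : ℝ) * ∑ t ∈ T, ((T.filter fun t' => g t' = g t).card : ℝ) := by
  have key : (↑(∑ lam : R, ‖∑ t ∈ T, χ (lam * g t)‖ ^ 2) : ℂ)
      = (Fintype.card R : ℝ) * ∑ t ∈ T, ((T.filter fun t' => g t' = g t).card : ℝ) := by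
    push_cast
    calc (∑ lam : R, (‖∑ t ∈ T, χ (lam * g t)‖ : ℂ) ^ 2)
        = ∑ lam : R, (∑ t ∈ T, χ (lam * g t)) * (starRingEnd ℂ) (∑ t' ∈ T, χ (lam * g t')) := by
          refine Finset.sum_congr rfl fun lam _ => ?_
          rw [Complex.mul_conj]
          norm_cast
          rw [Complex.normSq_eq_norm_sq]
      _ = ∑ lam : R, ∑ t ∈ T, ∑ t' ∈ T, χ (lam * (g t - g t')) := by
          refine Finset.sum_congr rfl fun lam _ => ?_
          rw [map_sum, Finset.sum_mul_sum]
          refine Finset.sum_congr rfl fun t _ => Finset.sum_congr rfl fun t' _ => ?_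
          rw [← AddChar.map_neg_eq_conj, ← AddChar.map_add_eq_mul]
          congr 1
          ring
      _ = ∑ t ∈ T, ∑ t' ∈ T, ∑ lam : R, χ (lam * (g t - g t')) := by
          rw [Finset.sum_comm]
          refine Finset.sum_congr rfl fun t _ => Finset.sum_comm
      _ = ∑ t ∈ T, ∑ t' ∈ T, (if g t' = g t then (Fintype.card R : ℂ) else 0) := by
          refine Finset.sum_congr rfl fun t _ => Finset.sum_congr rfl fun t' _ => ?_
          rw [delta_sum χ hχ]
          congr 1
          simp [sub_eq_zero, eq_comm]
      _ = ∑ t ∈ T, ((T.filter fun t' => g t' = g t).card : ℂ) * (Fintype.card R : ℂ) := by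
          refine Finset.sum_congr rfl fun t _ => ?_
          rw [Finset.sum_ite, Finset.sum_const, Finset.sum_const_zero, add_zero, nsmul_eq_mul]
      _ = (Fintype.card R : ℂ) * ∑ t ∈ T, ((T.filter fun t' => g t' = g t).card : ℂ) := by
          rw [Finset.mul_sum]
          exact Finset.sum_congr rfl fun t _ => mul_comm _ _
  exact_mod_cast key

lemma F1_bound (χ : AddChar R ℂ) (hχ : ∀ z : R, z ≠ 0 → ∃ lam : R, χ (lam * z) ≠ 1)
    (A' S : Finset R) (M : ℕ) (lam : R)
    (hann : ((univ.filter fun x : R => lam * x = 0).card : ℝ) ≤ M)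
    (h2 : Function.Bijective fun x : R => 2 * x) :
    ‖∑ a ∈ A', ∑ s ∈ S, χ (lam * (-(s - a) ^ 2))‖ ^ 2 ≤
      (A'.card : ℝ) * ((Fintype.card R : ℝ) * (S.card * M)) := by
  set h : R → ℂ := fun a => ∑ s ∈ S, χ (lam * (-(s - a) ^ 2)) with hh
  have step1 : ‖∑ a ∈ A', h a‖ ≤ ∑ a ∈ A', ‖h a‖ := norm_sum_le _ _
  have step2 : (∑ a ∈ A', ‖h a‖) ^ 2 ≤ (A'.card : ℝ) * ∑ a ∈ A', ‖h a‖ ^ 2 :=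
    sq_sum_le_card_mul_sum_sq
  have step3 : ∑ a ∈ A', ‖h a‖ ^ 2 ≤ ∑ a : R, ‖h a‖ ^ 2 :=
    Finset.sum_le_sum_of_subset_of_nonneg (Finset.subset_univ _)
      (fun _ _ _ => sq_nonneg _)
  -- compute the complete sum
  have step4 : (∑ a : R, ‖h a‖ ^ 2) =
      (Fintype.card R : ℝ) * ∑ s ∈ S, ((S.filter fun s' => lam * (s' - s) = 0).card : ℝ) := by
    have key : (↑(∑ a : R, ‖h a‖ ^ 2) : ℂ) =
        (↑((Fintype.card R : ℝ) * ∑ s ∈ S, ((S.filter fun s' => lam * (s' - s) = 0).card : ℝ)) : ℂ) := by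
      push_cast
      calc (∑ a : R, (‖h a‖ : ℂ) ^ 2)
          = ∑ a : R, (h a * (starRingEnd ℂ) (h a)) := by
            refine Finset.sum_congr rfl fun a _ => ?_
            rw [Complex.mul_conj, Complex.normSq_eq_norm_sq]
            norm_cast
        _ = ∑ a : R, ∑ s ∈ S, ∑ s' ∈ S, χ (lam * (-(s - a) ^ 2)) * χ (lam * (s' - a) ^ 2) := by
            refine Finset.sum_congr rfl fun a _ => ?_
            rw [hh, map_sum, Finset.sum_mul_sum]
            refine Finset.sum_congr rfl fun s _ => Finset.sum_congr rfl fun s' _ => ?_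
            congr 1
            rw [← AddChar.map_neg_eq_conj]
            congr 1
            ring
        _ = ∑ s ∈ S, ∑ s' ∈ S, ∑ a : R, χ ((lam * (s' - s)) * (s' + s - 2 * a)) := by
            rw [Finset.sum_comm]
            refine Finset.sum_congr rfl fun s _ => ?_
            rw [Finset.sum_comm]
            refine Finset.sum_congr rfl fun s' _ => Finset.sum_congr rfl fun a _ => ?_
            rw [← AddChar.map_add_eq_mul]
            congr 1
            ring
        _ = ∑ s ∈ S, ∑ s' ∈ S, (if lam * (s' - s) = 0 then (Fintype.card R : ℂ) else 0) := by
            refine Finset.sum_congr rfl fun s _ => Finset.sum_congr rfl fun s' _ => ?_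
            have hbij : Function.Bijective (fun a : R => s' + s - 2 * a) := by
              have : (fun a : R => s' + s - 2 * a) = (fun y : R => s' + s - y) ∘ (fun a => 2 * a) := rfl
              rw [this]
              exact (Function.Involutive.bijective (fun y => by simp)).comp h2
            calc ∑ a : R, χ ((lam * (s' - s)) * (s' + s - 2 * a))
                = ∑ u : R, χ ((lam * (s' - s)) * u) :=
                  hbij.sum_comp (fun u => χ (lam * (s' - s) * u))
              _ = ∑ u : R, χ (u * (lam * (s' - s))) := by
                  refine Finset.sum_congr rfl fun u _ => ?_; rw [mul_comm]
              _ = _ := delta_sum χ hχ _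

        _ = ∑ s ∈ S, ((S.filter fun s' => lam * (s' - s) = 0).card : ℂ) * (Fintype.card R : ℂ) := by
            refine Finset.sum_congr rfl fun s _ => ?_
            rw [Finset.sum_ite, Finset.sum_const, Finset.sum_const_zero, add_zero, nsmul_eq_mul]
        _ = (Fintype.card R : ℂ) * ∑ s ∈ S, ((S.filter fun s' => lam * (s' - s) = 0).card : ℂ) := by
            rw [Finset.mul_sum]
            exact Finset.sum_congr rfl fun t _ => mul_comm _ _
    exact_mod_cast key
  have step5 : ∑ s ∈ S, ((S.filter fun s' => lam * (s' - s) = 0).card : ℝ) ≤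
      (S.card : ℝ) * M := by
    have : ∀ s ∈ S, ((S.filter fun s' => lam * (s' - s) = 0).card : ℝ) ≤ M := by
      intro s _
      have hinj : Set.InjOn (fun s' => s' - s) (S.filter fun s' => lam * (s' - s) = 0) := by
        intro x hx y hy hxy
        simpa using sub_left_injective hxy
      have hsub : ∀ s' ∈ (S.filter fun s' => lam * (s' - s) = 0),
          (s' - s) ∈ (univ.filter fun x : R => lam * x = 0) := by
        intro s' hs'
        simp only [Finset.mem_filter] at hs' ⊢
        exact ⟨Finset.mem_univ _, hs'.2⟩
      have := Finset.card_le_card_of_injOn _ hsub hinj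
      calc ((S.filter fun s' => lam * (s' - s) = 0).card : ℝ)
          ≤ ((univ.filter fun x : R => lam * x = 0).card : ℝ) := by exact_mod_cast this
        _ ≤ M := hann
    calc ∑ s ∈ S, ((S.filter fun s' => lam * (s' - s) = 0).card : ℝ)
        ≤ ∑ s ∈ S, (M : ℝ) := Finset.sum_le_sum this
      _ = (S.card : ℝ) * M := by rw [Finset.sum_const, nsmul_eq_mul]
  calc ‖∑ a ∈ A', h a‖ ^ 2 ≤ (∑ a ∈ A', ‖h a‖) ^ 2 := by
        apply pow_le_pow_left₀ (norm_nonneg _) step1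
    _ ≤ (A'.card : ℝ) * ∑ a ∈ A', ‖h a‖ ^ 2 := step2
    _ ≤ (A'.card : ℝ) * ∑ a : R, ‖h a‖ ^ 2 := by
        apply mul_le_mul_of_nonneg_left step3 (Nat.cast_nonneg _)
    _ = (A'.card : ℝ) * ((Fintype.card R : ℝ) * ∑ s ∈ S, ((S.filter fun s' => lam * (s' - s) = 0).card : ℝ)) := by rw [step4]
    _ ≤ (A'.card : ℝ) * ((Fintype.card R : ℝ) * ((S.card : ℝ) * M)) := by
        apply mul_le_mul_of_nonneg_left _ (Nat.cast_nonneg _)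
        apply mul_le_mul_of_nonneg_left step5 (Nat.cast_nonneg _)

lemma key (χ : AddChar R ℂ) (hχ : ∀ z : R, z ≠ 0 → ∃ lam : R, χ (lam * z) ≠ 1)
    (A' S D : Finset R) (M : ℕ)
    (hS : ∀ a ∈ A', ∀ t ∈ A', a + t ∈ S)
    (hD : ∀ t ∈ A', ∀ b ∈ A', t ^ 2 + b ^ 2 ∈ D)
    (hsq : ∀ b ∈ A', (A'.filter fun b' => b' ^ 2 = b ^ 2).card ≤ 2)
    (hann : ∀ lam : R, lam ≠ 0 → (univ.filter fun x : R => lam * x = 0).card ≤ M)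
    (h2 : Function.Bijective fun x : R => 2 * x) :
    (Fintype.card R : ℝ) * (A'.card : ℝ) ^ 3 ≤
      (A'.card : ℝ) ^ 2 * S.card * D.card +
        (A'.card : ℝ) * (Fintype.card R : ℝ) *
          Real.sqrt (2 * (Fintype.card R : ℝ) * M * S.card * D.card) := by
  classical
  set N := Fintype.card R with hN
  set F1 : R → ℂ := fun lam => ∑ a ∈ A', ∑ s ∈ S, χ (lam * (-(s - a) ^ 2)) with hF1
  set F2 : R → ℂ := fun lam => ∑ b ∈ A', χ (lam * (-b ^ 2)) with hF2
  set F3 : R → ℂ := fun lam => ∑ d ∈ D, χ (lam * d) with hF3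
  -- product expansion
  have hprod : ∀ lam : R, F1 lam * F2 lam * F3 lam =
      ∑ a ∈ A', ∑ b ∈ A', ∑ s ∈ S, ∑ d ∈ D,
        χ (lam * (d - ((s - a) ^ 2 + b ^ 2))) := by
    intro lam
    have step : F1 lam * F2 lam * F3 lam =
        ∑ a ∈ A', ∑ b ∈ A', ∑ s ∈ S, ∑ d ∈ D,
          χ (lam * (-(s - a) ^ 2)) * χ (lam * (-b ^ 2)) * χ (lam * d) := by
      simp only [hF1, hF2, hF3]
      rw [Finset.sum_mul_sum, Finset.sum_mul]
      refine Finset.sum_congr rfl fun a _ => ?_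
      rw [Finset.sum_mul]
      refine Finset.sum_congr rfl fun b _ => ?_
      rw [Finset.sum_mul, Finset.sum_mul]
      refine Finset.sum_congr rfl fun s _ => ?_
      rw [Finset.mul_sum]
    rw [step]
    refine Finset.sum_congr rfl fun a _ => Finset.sum_congr rfl fun b _ =>
      Finset.sum_congr rfl fun s _ => Finset.sum_congr rfl fun d _ => ?_
    rw [← AddChar.map_add_eq_mul, ← AddChar.map_add_eq_mul]
    congr 1
    ring
  -- the count
  set cnt : ℕ := ∑ a ∈ A', ∑ b ∈ A', ∑ s ∈ S,
      (if (s - a) ^ 2 + b ^ 2 ∈ D then 1 else 0) with hcntdef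
  have hJ : ∑ lam : R, F1 lam * F2 lam * F3 lam = (N : ℂ) * (cnt : ℂ) := by
    calc ∑ lam : R, F1 lam * F2 lam * F3 lam
        = ∑ lam : R, ∑ a ∈ A', ∑ b ∈ A', ∑ s ∈ S, ∑ d ∈ D,
            χ (lam * (d - ((s - a) ^ 2 + b ^ 2))) :=
          Finset.sum_congr rfl fun lam _ => hprod lam
      _ = ∑ a ∈ A', ∑ b ∈ A', ∑ s ∈ S, ∑ d ∈ D, ∑ lam : R,
            χ (lam * (d - ((s - a) ^ 2 + b ^ 2))) := by
          rw [Finset.sum_comm]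
          refine Finset.sum_congr rfl fun a _ => ?_
          rw [Finset.sum_comm]
          refine Finset.sum_congr rfl fun b _ => ?_
          rw [Finset.sum_comm]
          refine Finset.sum_congr rfl fun s _ => ?_
          rw [Finset.sum_comm]
      _ = ∑ a ∈ A', ∑ b ∈ A', ∑ s ∈ S, ∑ d ∈ D,
            (if d = (s - a) ^ 2 + b ^ 2 then (N : ℂ) else 0) := by
          refine Finset.sum_congr rfl fun a _ => Finset.sum_congr rfl fun b _ =>
            Finset.sum_congr rfl fun s _ => Finset.sum_congr rfl fun d _ => ?_
          rw [delta_sum χ hχ]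
          congr 1
          simp [sub_eq_zero]
      _ = ∑ a ∈ A', ∑ b ∈ A', ∑ s ∈ S,
            (if (s - a) ^ 2 + b ^ 2 ∈ D then (N : ℂ) else 0) := by
          refine Finset.sum_congr rfl fun a _ => Finset.sum_congr rfl fun b _ =>
            Finset.sum_congr rfl fun s _ => ?_
          rw [Finset.sum_ite_eq' D ((s - a) ^ 2 + b ^ 2) (fun _ => (N : ℂ))]
      _ = (N : ℂ) * (cnt : ℂ) := by
          rw [hcntdef]
          push_cast
          rw [Finset.mul_sum]
          refine Finset.sum_congr rfl fun a _ => ?_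
          rw [Finset.mul_sum]
          refine Finset.sum_congr rfl fun b _ => ?_
          rw [Finset.mul_sum]
          refine Finset.sum_congr rfl fun s _ => ?_
          simp
  -- lower bound on the count
  have hcnt : A'.card ^ 3 ≤ cnt := by
    have inner : ∀ a ∈ A', ∀ b ∈ A',
        A'.card ≤ ∑ s ∈ S, (if (s - a) ^ 2 + b ^ 2 ∈ D then 1 else 0) := by
      intro a ha b hb
      have himg : (A'.image fun t => a + t) ⊆ S := by
        intro s hs
        obtain ⟨t, ht, rfl⟩ := Finset.mem_image.mp hs
        exact hS a ha t ht
      have hval : ∀ s ∈ (A'.image fun t => a + t),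
          (if (s - a) ^ 2 + b ^ 2 ∈ D then (1 : ℕ) else 0) = 1 := by
        intro s hs
        obtain ⟨t, ht, rfl⟩ := Finset.mem_image.mp hs
        have h5 : (a + t - a) ^ 2 + b ^ 2 ∈ D := by
          rw [add_sub_cancel_left]
          exact hD t ht b hb
        simp only [if_pos h5]
      calc A'.card = (A'.image fun t => a + t).card := by
            rw [Finset.card_image_of_injective _ (add_right_injective a)]
        _ = ∑ s ∈ (A'.image fun t => a + t), (if (s - a) ^ 2 + b ^ 2 ∈ D then 1 else 0) := by
            rw [Finset.sum_congr rfl hval, Finset.sum_const, smul_eq_mul, mul_one]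
        _ ≤ ∑ s ∈ S, (if (s - a) ^ 2 + b ^ 2 ∈ D then 1 else 0) :=
            Finset.sum_le_sum_of_subset himg
    calc A'.card ^ 3 = ∑ _a ∈ A', ∑ _b ∈ A', A'.card := by
          simp [Finset.sum_const, smul_eq_mul]; ring
      _ ≤ ∑ a ∈ A', ∑ b ∈ A', ∑ s ∈ S, (if (s - a) ^ 2 + b ^ 2 ∈ D then 1 else 0) :=
          Finset.sum_le_sum fun a ha => Finset.sum_le_sum fun b hb => inner a ha b hb
      _ = cnt := rfl
  -- main term
  have hmain : F1 0 * F2 0 * F3 0 = ((A'.card : ℂ) * S.card) * (A'.card : ℂ) * (D.card : ℂ) := by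
    rw [hF1, hF2, hF3]
    simp [AddChar.map_zero_eq_one, Finset.sum_const]
  -- norm bounds
  have hF2sq : ∑ lam : R, ‖F2 lam‖ ^ 2 ≤ 2 * (N : ℝ) * A'.card := by
    have := sum_normsq χ hχ A' (fun b => -b ^ 2)
    rw [hF2]
    rw [this]
    have hb : ∀ b ∈ A', ((A'.filter fun b' => -b' ^ 2 = -b ^ 2).card : ℝ) ≤ 2 := by
      intro b hb
      have : (A'.filter fun b' => -b' ^ 2 = -b ^ 2) = (A'.filter fun b' => b' ^ 2 = b ^ 2) := by
        apply Finset.filter_congr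
        intro x _
        simp [neg_inj]
      rw [this]
      exact_mod_cast hsq b hb
    calc (N : ℝ) * ∑ b ∈ A', ((A'.filter fun b' => -b' ^ 2 = -b ^ 2).card : ℝ)
        ≤ (N : ℝ) * ∑ _b ∈ A', (2 : ℝ) := by
          apply mul_le_mul_of_nonneg_left (Finset.sum_le_sum hb) (Nat.cast_nonneg _)
      _ = 2 * (N : ℝ) * A'.card := by
          rw [Finset.sum_const, nsmul_eq_mul]
          ring
  have hF3sq : ∑ lam : R, ‖F3 lam‖ ^ 2 ≤ (N : ℝ) * D.card := by
    have h := sum_normsq χ hχ D (fun d => d)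
    rw [hF3]
    rw [h]
    have hb : ∀ d ∈ D, ((D.filter fun d' => d' = d).card : ℝ) ≤ 1 := by
      intro d hd
      rw [Finset.filter_eq' D d, if_pos hd]
      simp
    calc (N : ℝ) * ∑ d ∈ D, ((D.filter fun d' => d' = d).card : ℝ)
        ≤ (N : ℝ) * ∑ _d ∈ D, (1 : ℝ) := by
          apply mul_le_mul_of_nonneg_left (Finset.sum_le_sum hb) (Nat.cast_nonneg _)
      _ = (N : ℝ) * D.card := by rw [Finset.sum_const, nsmul_eq_mul, mul_one]
  set B : ℝ := Real.sqrt ((A'.card : ℝ) * ((N : ℝ) * (S.card * M))) with hB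
  have hF1n : ∀ lam : R, lam ≠ 0 → ‖F1 lam‖ ≤ B := by
    intro lam hlam
    have h1 := F1_bound χ hχ A' S M lam (by exact_mod_cast hann lam hlam) h2
    have h2' : ‖F1 lam‖ = Real.sqrt (‖F1 lam‖ ^ 2) := by
      rw [Real.sqrt_sq (norm_nonneg _)]
    rw [h2', hB]
    exact Real.sqrt_le_sqrt h1
  -- Cauchy-Schwarz for F2 F3
  have hCS : ∑ lam : R, ‖F2 lam‖ * ‖F3 lam‖ ≤
      Real.sqrt (2 * (N : ℝ) * A'.card) * Real.sqrt ((N : ℝ) * D.card) := by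
    have h1 : (∑ lam : R, ‖F2 lam‖ * ‖F3 lam‖) ^ 2 ≤
        (∑ lam : R, ‖F2 lam‖ ^ 2) * ∑ lam : R, ‖F3 lam‖ ^ 2 :=
      Finset.sum_mul_sq_le_sq_mul_sq _ _ _
    have h2' : (∑ lam : R, ‖F2 lam‖ * ‖F3 lam‖) ^ 2 ≤
        (2 * (N : ℝ) * A'.card) * ((N : ℝ) * D.card) := by
      refine h1.trans (mul_le_mul hF2sq hF3sq ?_ ?_)
      · exact Finset.sum_nonneg fun lam _ => sq_nonneg _
      · positivity
    have h3 : ∑ lam : R, ‖F2 lam‖ * ‖F3 lam‖ ≤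
        Real.sqrt ((2 * (N : ℝ) * A'.card) * ((N : ℝ) * D.card)) := by
      have hnn : (0:ℝ) ≤ ∑ lam : R, ‖F2 lam‖ * ‖F3 lam‖ :=
        Finset.sum_nonneg fun lam _ => mul_nonneg (norm_nonneg _) (norm_nonneg _)
      nlinarith [Real.sq_sqrt (by positivity : (0:ℝ) ≤ (2 * (N : ℝ) * A'.card) * ((N : ℝ) * D.card)),
        Real.sqrt_nonneg ((2 * (N : ℝ) * A'.card) * ((N : ℝ) * D.card))]
    rwa [Real.sqrt_mul (by positivity)] at h3
  -- assemble
  have hsplit : ∑ lam : R, F1 lam * F2 lam * F3 lam =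
      F1 0 * F2 0 * F3 0 + ∑ lam ∈ univ.erase 0, F1 lam * F2 lam * F3 lam :=
    (Finset.add_sum_erase univ _ (Finset.mem_univ 0)).symm
  have herr : ‖∑ lam ∈ univ.erase 0, F1 lam * F2 lam * F3 lam‖ ≤
      B * (Real.sqrt (2 * (N : ℝ) * A'.card) * Real.sqrt ((N : ℝ) * D.card)) := by
    calc ‖∑ lam ∈ univ.erase 0, F1 lam * F2 lam * F3 lam‖
        ≤ ∑ lam ∈ univ.erase 0, ‖F1 lam * F2 lam * F3 lam‖ := norm_sum_le _ _
      _ ≤ ∑ lam ∈ univ.erase 0, B * (‖F2 lam‖ * ‖F3 lam‖) := by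
          refine Finset.sum_le_sum fun lam hlam => ?_
          have hlam0 : lam ≠ 0 := (Finset.mem_erase.mp hlam).1
          rw [norm_mul, norm_mul]
          have h4 : ‖F1 lam‖ * ‖F2 lam‖ * ‖F3 lam‖ ≤ B * ‖F2 lam‖ * ‖F3 lam‖ := by
            apply mul_le_mul_of_nonneg_right _ (norm_nonneg _)
            exact mul_le_mul_of_nonneg_right (hF1n lam hlam0) (norm_nonneg _)
          linarith [h4]
      _ = B * ∑ lam ∈ univ.erase 0, ‖F2 lam‖ * ‖F3 lam‖ := by rw [Finset.mul_sum]
      _ ≤ B * ∑ lam : R, ‖F2 lam‖ * ‖F3 lam‖ := by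
          apply mul_le_mul_of_nonneg_left _ (Real.sqrt_nonneg _)
          apply Finset.sum_le_sum_of_subset_of_nonneg (Finset.erase_subset _ _)
          intro lam _ _
          exact mul_nonneg (norm_nonneg _) (norm_nonneg _)
      _ ≤ B * (Real.sqrt (2 * (N : ℝ) * A'.card) * Real.sqrt ((N : ℝ) * D.card)) :=
          mul_le_mul_of_nonneg_left hCS (Real.sqrt_nonneg _)
  -- final: N * cnt ≤ main + err
  have hfinal : (N : ℝ) * (cnt : ℝ) ≤ (A'.card : ℝ) ^ 2 * S.card * D.card +
      B * (Real.sqrt (2 * (N : ℝ) * A'.card) * Real.sqrt ((N : ℝ) * D.card)) := by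
    have e1 : (N : ℝ) * (cnt : ℝ) = ‖(N : ℂ) * (cnt : ℂ)‖ := by
      rw [norm_mul]
      norm_num [Complex.norm_natCast]
    rw [e1, ← hJ, hsplit]
    calc ‖F1 0 * F2 0 * F3 0 + ∑ lam ∈ univ.erase 0, F1 lam * F2 lam * F3 lam‖
        ≤ ‖F1 0 * F2 0 * F3 0‖ + ‖∑ lam ∈ univ.erase 0, F1 lam * F2 lam * F3 lam‖ :=
          norm_add_le _ _
      _ ≤ (A'.card : ℝ) ^ 2 * S.card * D.card +
          B * (Real.sqrt (2 * (N : ℝ) * A'.card) * Real.sqrt ((N : ℝ) * D.card)) := by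
          apply add_le_add _ herr
          rw [hmain]
          rw [norm_mul, norm_mul, norm_mul]
          norm_num [Complex.norm_natCast]
          ring_nf
          norm_num
  -- convert sqrt product
  have hsqrt : B * (Real.sqrt (2 * (N : ℝ) * A'.card) * Real.sqrt ((N : ℝ) * D.card)) ≤
      (A'.card : ℝ) * (N : ℝ) * Real.sqrt (2 * (N : ℝ) * M * S.card * D.card) := by
    have e1 : B * (Real.sqrt (2 * (N : ℝ) * A'.card) * Real.sqrt ((N : ℝ) * D.card)) =
        Real.sqrt (((A'.card : ℝ) * ((N : ℝ) * (S.card * M))) *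
          ((2 * (N : ℝ) * A'.card) * ((N : ℝ) * D.card))) := by
      rw [hB, ← Real.sqrt_mul (by positivity), ← Real.sqrt_mul (by positivity)]
    have e2 : (A'.card : ℝ) * (N : ℝ) * Real.sqrt (2 * (N : ℝ) * M * S.card * D.card) =
        Real.sqrt (((A'.card : ℝ) * (N : ℝ)) ^ 2 * (2 * (N : ℝ) * M * S.card * D.card)) := by
      rw [Real.sqrt_mul (sq_nonneg _), Real.sqrt_sq (by positivity)]
    rw [e1, e2]
    apply Real.sqrt_le_sqrt
    nlinarith [sq_nonneg ((A'.card : ℝ) * (N : ℝ))]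
  have hle : (N : ℝ) * (A'.card : ℝ) ^ 3 ≤ (N : ℝ) * (cnt : ℝ) := by
    apply mul_le_mul_of_nonneg_left _ (Nat.cast_nonneg _)
    exact_mod_cast Nat.cast_le.mpr hcnt
  calc (N : ℝ) * (A'.card : ℝ) ^ 3 ≤ (N : ℝ) * (cnt : ℝ) := hle
    _ ≤ (A'.card : ℝ) ^ 2 * S.card * D.card +
        B * (Real.sqrt (2 * (N : ℝ) * A'.card) * Real.sqrt ((N : ℝ) * D.card)) := hfinal
    _ ≤ (A'.card : ℝ) ^ 2 * S.card * D.card +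
        (A'.card : ℝ) * (N : ℝ) * Real.sqrt (2 * (N : ℝ) * M * S.card * D.card) :=
        add_le_add (le_refl _) hsqrt

lemma double_bij (hodd : Odd (Fintype.card R)) : Function.Bijective (fun x : R => 2 * x) := by
  rw [Fintype.bijective_iff_injective_and_card]
  refine ⟨fun x y hxy => ?_, rfl⟩
  simp only at hxy
  have hz : (2 : R) * (x - y) = 0 := by rw [mul_sub, hxy, sub_self]
  have hz' : (2 : ℕ) • (x - y) = 0 := by
    rw [nsmul_eq_mul]; exact_mod_cast hz
  have hdvd : addOrderOf (x - y) ∣ 2 := addOrderOf_dvd_of_nsmul_eq_zero hz'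
  have hdvd2 : addOrderOf (x - y) ∣ Fintype.card R := addOrderOf_dvd_card
  have hcop : Nat.Coprime 2 (Fintype.card R) := Nat.coprime_two_left.mpr hodd
  have h1 : addOrderOf (x - y) ∣ Nat.gcd 2 (Fintype.card R) := Nat.dvd_gcd hdvd hdvd2
  rw [Nat.Coprime] at hcop
  rw [hcop] at h1
  have h2 : addOrderOf (x - y) = 1 := Nat.eq_one_of_dvd_one h1
  have h3 := AddMonoid.addOrderOf_eq_one_iff.mp h2
  have h4 : x - y = 0 := h3
  linear_combination h4

end SP8

theorem stmt_8 :
    ∃ c : ℝ, 0 < c ∧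
      ∀ (R : Type) [CommRing R] [Fintype R] [DecidableEq R] [IsLocalRing R]
        [IsPrincipalIdealRing R] (q r : ℕ),
        (∃ p k : ℕ, p.Prime ∧ Odd p ∧ 1 ≤ k ∧ q = p ^ k) → 1 ≤ r →
        Fintype.card R = q ^ r →
        Nat.card (IsLocalRing.ResidueField R) = q →
        ∀ A : Finset R, 2 * q ^ (r - 1) ≤ A.card →
          c * min ((q : ℝ) ^ ((r : ℝ) / 2) * (A.card : ℝ) ^ ((1 : ℝ) / 2))
              ((A.card : ℝ) ^ 2 / (q : ℝ) ^ ((2 * (r : ℝ) - 1) / 2))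
            ≤ max (((A + A).card : ℝ))
                ((((A.image fun a => a ^ 2) + (A.image fun a => a ^ 2)).card : ℝ)) := by
  refine ⟨1/16, by norm_num, ?_⟩
  intro R _ _ _ _ _ q r hq hr hcard hres A hA
  classical
  obtain ⟨p, k, hp, hpodd, hk, hqpk⟩ := hq
  -- basic facts about q
  have hq3 : 3 ≤ q := by
    have hp3 : 3 ≤ p := by
      have h2 := hp.two_le
      have hne : p ≠ 2 := by
        rintro rfl
        exact (by decide : ¬ Odd 2) hpodd
      omega
    calc 3 ≤ p := hp3
      _ ≤ p ^ k := Nat.le_self_pow (by omega) p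
      _ = q := hqpk.symm
  have hqodd : Odd q := hqpk ▸ hpodd.pow
  have hq0 : 0 < q := by omega
  -- nontrivial
  have hcard2 : 2 ≤ Fintype.card R := by
    rw [hcard]
    calc 2 ≤ q := by omega
      _ ≤ q ^ r := Nat.le_self_pow (by omega) q
  haveI : Nontrivial R := Fintype.one_lt_card_iff_nontrivial.mp (by omega)
  -- cardinality of the maximal ideal
  have hmcard : Nat.card (IsLocalRing.maximalIdeal R) = q ^ (r - 1) := by
    have h1 := Submodule.card_eq_card_quotient_mul_card (IsLocalRing.maximalIdeal R)
    rw [Nat.card_eq_fintype_card, hcard] at h1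
    have h2 : Nat.card (R ⧸ IsLocalRing.maximalIdeal R) = q := hres
    rw [h2] at h1
    have h3 : q ^ r = q ^ (r - 1) * q := by
      rw [← pow_succ]
      congr 1
      omega
    rw [h3] at h1
    exact Nat.eq_of_mul_eq_mul_right hq0 h1.symm
  -- the nonunits
  have hnon : (univ.filter fun x : R => ¬IsUnit x).card = q ^ (r - 1) := by
    rw [← hmcard]
    rw [Nat.card_eq_fintype_card]
    rw [← Fintype.card_subtype]
    apply Fintype.card_congr
    apply Equiv.subtypeEquivRight
    intro x
    rw [IsLocalRing.mem_maximalIdeal]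
    rfl
  -- 2 is invertible
  have hRodd : Odd (Fintype.card R) := by rw [hcard]; exact hqodd.pow
  have h2bij : Function.Bijective (fun x : R => 2 * x) := SP8.double_bij hRodd
  have h2unit : IsUnit (2 : R) := by
    obtain ⟨y, hy⟩ := h2bij.2 1
    exact IsUnit.of_mul_eq_one (a := 2) y hy
  -- the unit part of A
  set A' : Finset R := A.filter (fun x => IsUnit x) with hA'def
  have hA'sub : A' ⊆ A := Finset.filter_subset _ _
  have hA'card : A.card ≤ 2 * A'.card := by
    have hsplit := Finset.card_filter_add_card_filter_not
      (s := A) (p := fun x => IsUnit x)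
    have hsub2 : (A.filter fun x => ¬IsUnit x) ⊆ (univ.filter fun x : R => ¬IsUnit x) := by
      intro x hx
      simp only [Finset.mem_filter] at hx ⊢
      exact ⟨Finset.mem_univ _, hx.2⟩
    have hle : (A.filter fun x => ¬IsUnit x).card ≤ q ^ (r - 1) := by
      rw [← hnon]
      exact Finset.card_le_card hsub2
    have hAA : A'.card = (A.filter fun x => IsUnit x).card := rfl
    omega
  -- hsq hypothesis
  have hsq : ∀ b ∈ A', (A'.filter fun b' => b' ^ 2 = b ^ 2).card ≤ 2 := by
    intro b hb
    have hbu : IsUnit b := (Finset.mem_filter.mp hb).2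
    have hsub : (A'.filter fun b' => b' ^ 2 = b ^ 2) ⊆ insert b {-b} := by
      intro x hx
      obtain ⟨hxA, hx2⟩ := Finset.mem_filter.mp hx
      have hfac : (x - b) * (x + b) = 0 := by
        have h9 : (x - b) * (x + b) = x ^ 2 - b ^ 2 := by ring
        rw [h9, hx2, sub_self]
      by_cases hu : IsUnit (x - b)
      · have : x + b = 0 := by
          have h10 := hu.mul_right_eq_zero.mp hfac
          exact h10
        have : x = -b := by linear_combination this
        simp [this]
      · by_cases hu2 : IsUnit (x + b)
        · have h11 : (x + b) * (x - b) = 0 := by rw [mul_comm]; exact hfac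
          have : x - b = 0 := hu2.mul_right_eq_zero.mp h11
          have : x = b := by linear_combination this
          simp [this]
        · exfalso
          have hm1 : x - b ∈ IsLocalRing.maximalIdeal R :=
            (IsLocalRing.mem_maximalIdeal _).mpr hu
          have hm2 : x + b ∈ IsLocalRing.maximalIdeal R :=
            (IsLocalRing.mem_maximalIdeal _).mpr hu2
          have hm3 : (2 : R) * b ∈ IsLocalRing.maximalIdeal R := by
            have h12 : (2 : R) * b = (x + b) - (x - b) := by ring
            rw [h12]
            exact sub_mem hm2 hm1
          have : ¬IsUnit ((2 : R) * b) := (IsLocalRing.mem_maximalIdeal _).mp hm3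
          exact this (h2unit.mul hbu)
    calc (A'.filter fun b' => b' ^ 2 = b ^ 2).card ≤ (insert b ({-b} : Finset R)).card :=
          Finset.card_le_card hsub
      _ ≤ 2 := by
          apply (Finset.card_insert_le _ _).trans
          simp
  -- annihilator bound
  have hann : ∀ lam : R, lam ≠ 0 →
      (univ.filter fun x : R => lam * x = 0).card ≤ q ^ (r - 1) := by
    intro lam hlam
    rw [← hnon]
    apply Finset.card_le_card
    intro x hx
    simp only [Finset.mem_filter] at hx ⊢
    refine ⟨Finset.mem_univ _, fun hxu => hlam ?_⟩
    have h13 := hx.2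
    have h14 := hxu.mul_left_eq_zero.mp h13
    exact h14
  -- apply the key inequality
  obtain ⟨χ, hχ0⟩ := SP8.exists_primitive (R := R)
  set S : Finset R := A + A with hSdef
  set D : Finset R := (A.image fun a => a ^ 2) + (A.image fun a => a ^ 2) with hDdef
  have hS : ∀ a ∈ A', ∀ t ∈ A', a + t ∈ S :=
    fun a ha t ht => Finset.add_mem_add (hA'sub ha) (hA'sub ht)
  have hD : ∀ t ∈ A', ∀ b ∈ A', t ^ 2 + b ^ 2 ∈ D :=
    fun t ht b hb => Finset.add_mem_add
      (Finset.mem_image_of_mem _ (hA'sub ht)) (Finset.mem_image_of_mem _ (hA'sub hb))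
  have KEY := SP8.key χ hχ0 A' S D (q ^ (r - 1)) hS hD hsq hann h2bij
  -- real arithmetic endgame
  set α : ℝ := (A'.card : ℝ) with hαdef
  set Ac : ℝ := (A.card : ℝ) with hAcdef
  set Sc : ℝ := (S.card : ℝ) with hScdef
  set Dc : ℝ := (D.card : ℝ) with hDcdef
  set X : ℝ := max Sc Dc with hXdef
  have hqR : (0:ℝ) < (q:ℝ) := by exact_mod_cast hq0
  have hNpos : (0:ℝ) < (q:ℝ) ^ r := by positivity
  have hMpos : (0:ℝ) < (q:ℝ) ^ (r - 1) := by positivity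
  have hPpos : (0:ℝ) < (q:ℝ) ^ (2 * r - 1) := by positivity
  have hNcast : (Fintype.card R : ℝ) = (q:ℝ) ^ r := by
    rw [hcard]; push_cast; ring
  have hMcast : ((q ^ (r - 1) : ℕ) : ℝ) = (q:ℝ) ^ (r - 1) := by push_cast; ring
  rw [hNcast, hMcast] at KEY
  have hα2 : Ac ≤ 2 * α := by rw [hAcdef, hαdef]; exact_mod_cast hA'card
  have hAc2 : 2 * (q:ℝ) ^ (r - 1) ≤ Ac := by rw [hAcdef]; exact_mod_cast hA
  have hαpos : (0:ℝ) < α := by linarith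
  have hAcpos : (0:ℝ) < Ac := by linarith
  have hScnn : (0:ℝ) ≤ Sc := Nat.cast_nonneg _
  have hDcnn : (0:ℝ) ≤ Dc := Nat.cast_nonneg _
  have hXnn : (0:ℝ) ≤ X := le_trans hScnn (le_max_left _ _)
  have hX2 : Sc * Dc ≤ X ^ 2 := by
    have h0 := mul_le_mul (le_max_left Sc Dc) (le_max_right Sc Dc) hDcnn hXnn
    calc Sc * Dc ≤ X * X := h0
      _ = X ^ 2 := (sq X).symm
  -- rpow squares
  have hxsq : ((q:ℝ) ^ ((r:ℝ) / 2)) ^ 2 = (q:ℝ) ^ r := by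
    rw [← Real.rpow_natCast ((q:ℝ) ^ ((r:ℝ) / 2)) 2, ← Real.rpow_mul (le_of_lt hqR)]
    rw [show ((r:ℝ) / 2 * (2:ℕ)) = (r:ℕ) by push_cast; ring]
    rw [Real.rpow_natCast]
  have hasq : (Ac ^ ((1:ℝ) / 2)) ^ 2 = Ac := by
    rw [← Real.rpow_natCast (Ac ^ ((1:ℝ) / 2)) 2, ← Real.rpow_mul (le_of_lt hAcpos)]
    rw [show ((1:ℝ) / 2 * (2:ℕ)) = (1:ℝ) by push_cast; ring]
    exact Real.rpow_one Ac
  have hysq : ((q:ℝ) ^ ((2 * (r:ℝ) - 1) / 2)) ^ 2 = (q:ℝ) ^ (2 * r - 1) := by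
    rw [← Real.rpow_natCast ((q:ℝ) ^ ((2 * (r:ℝ) - 1) / 2)) 2,
      ← Real.rpow_mul (le_of_lt hqR)]
    rw [show ((2 * (r:ℝ) - 1) / 2 * (2:ℕ)) = ((2 * r - 1 : ℕ) : ℝ) by
      push_cast [Nat.cast_sub (by omega : 1 ≤ 2 * r)]; ring]
    rw [Real.rpow_natCast]
  have hqq : (q:ℝ) ^ r * (q:ℝ) ^ (r - 1) = (q:ℝ) ^ (2 * r - 1) := by
    rw [← pow_add]; congr 1; omega
  set xt : ℝ := (q:ℝ) ^ ((r:ℝ) / 2) * Ac ^ ((1:ℝ) / 2) with hxtdef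
  set yt : ℝ := Ac ^ 2 / (q:ℝ) ^ ((2 * (r:ℝ) - 1) / 2) with hytdef
  have hxtnn : 0 ≤ xt := by positivity
  have hytnn : 0 ≤ yt := by positivity
  -- split into two cases
  set W : ℝ := 2 * (q:ℝ) ^ r * (q:ℝ) ^ (r - 1) * Sc * Dc with hWdef
  have hWnn : 0 ≤ W := by positivity
  have hsplit : (q:ℝ) ^ r * α ^ 3 ≤ 2 * (α ^ 2 * Sc * Dc) ∨
      (q:ℝ) ^ r * α ^ 3 ≤ 2 * (α * (q:ℝ) ^ r * Real.sqrt W) := by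
    by_cases h : (q:ℝ) ^ r * α ^ 3 ≤ 2 * (α ^ 2 * Sc * Dc)
    · exact Or.inl h
    · right
      push_neg at h
      linarith [KEY]
  rcases hsplit with hC | hC
  · -- case 1 : S*D ≥ q^r * α / 2, use the xt branch
    have hSD : (q:ℝ) ^ r * α ≤ 2 * (Sc * Dc) := by
      have h4 : ((q:ℝ) ^ r * α) * α ^ 2 ≤ (2 * (Sc * Dc)) * α ^ 2 := by
        calc ((q:ℝ) ^ r * α) * α ^ 2 = (q:ℝ) ^ r * α ^ 3 := by ring
          _ ≤ 2 * (α ^ 2 * Sc * Dc) := hC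
          _ = (2 * (Sc * Dc)) * α ^ 2 := by ring
      exact le_of_mul_le_mul_right h4 (by positivity)
    have hfin : ((1/16) * xt) ^ 2 ≤ X ^ 2 := by
      have hexp : ((1/16) * xt) ^ 2 = (1/256) * ((q:ℝ) ^ r * Ac) := by
        rw [mul_pow, hxtdef, mul_pow, hxsq, hasq]; ring
      rw [hexp]
      have h5 : (q:ℝ) ^ r * Ac ≤ (q:ℝ) ^ r * (2 * α) :=
        mul_le_mul_of_nonneg_left hα2 (le_of_lt hNpos)
      have h5' : (q:ℝ) ^ r * (2 * α) = 2 * ((q:ℝ) ^ r * α) := by ring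
      linarith [hX2, hSD, sq_nonneg X]
    have h6 : (1/16 : ℝ) * xt ≤ X := le_of_pow_le_pow_left₀ (by norm_num) hXnn hfin
    calc (1/16 : ℝ) * min xt yt ≤ (1/16) * xt := by
          apply mul_le_mul_of_nonneg_left (min_le_left _ _) (by norm_num)
      _ ≤ X := h6
  · -- case 2 : use the yt branch
    have hcancel : α ^ 2 ≤ 2 * Real.sqrt W := by
      have h4 : α ^ 2 * (α * (q:ℝ) ^ r) ≤ (2 * Real.sqrt W) * (α * (q:ℝ) ^ r) := by
        calc α ^ 2 * (α * (q:ℝ) ^ r) = (q:ℝ) ^ r * α ^ 3 := by ring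
          _ ≤ 2 * (α * (q:ℝ) ^ r * Real.sqrt W) := hC
          _ = (2 * Real.sqrt W) * (α * (q:ℝ) ^ r) := by ring
      exact le_of_mul_le_mul_right h4 (by positivity)
    have hquart : α ^ 4 ≤ 4 * W := by
      have h5 : (α ^ 2) ^ 2 ≤ (2 * Real.sqrt W) ^ 2 :=
        pow_le_pow_left₀ (sq_nonneg _) hcancel 2
      have h6 : (2 * Real.sqrt W) ^ 2 = 4 * W := by
        rw [mul_pow, Real.sq_sqrt hWnn]; ring
      calc α ^ 4 = (α ^ 2) ^ 2 := by ring
        _ ≤ (2 * Real.sqrt W) ^ 2 := h5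
        _ = 4 * W := h6
    have hquart' : α ^ 4 ≤ 8 * ((q:ℝ) ^ (2 * r - 1)) * (Sc * Dc) := by
      calc α ^ 4 ≤ 4 * W := hquart
        _ = 8 * ((q:ℝ) ^ r * (q:ℝ) ^ (r - 1)) * (Sc * Dc) := by rw [hWdef]; ring
        _ = 8 * ((q:ℝ) ^ (2 * r - 1)) * (Sc * Dc) := by rw [hqq]
    have hAα : Ac ^ 4 ≤ 16 * α ^ 4 := by
      have h7 : Ac ^ 4 ≤ (2 * α) ^ 4 :=
        pow_le_pow_left₀ (le_of_lt hAcpos) hα2 4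
      calc Ac ^ 4 ≤ (2 * α) ^ 4 := h7
        _ = 16 * α ^ 4 := by ring
    have hfin : ((1/16) * yt) ^ 2 ≤ X ^ 2 := by
      have hexp : ((1/16) * yt) ^ 2 = (1/256) * (Ac ^ 4 / (q:ℝ) ^ (2 * r - 1)) := by
        rw [mul_pow, hytdef, div_pow, div_pow, hysq]
        ring
      rw [hexp]
      have h8 : Ac ^ 4 ≤ 128 * ((q:ℝ) ^ (2 * r - 1)) * X ^ 2 := by
        calc Ac ^ 4 ≤ 16 * α ^ 4 := hAα
          _ ≤ 16 * (8 * ((q:ℝ) ^ (2 * r - 1)) * (Sc * Dc)) := by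
              apply mul_le_mul_of_nonneg_left hquart' (by norm_num)
          _ = 128 * ((q:ℝ) ^ (2 * r - 1)) * (Sc * Dc) := by ring
          _ ≤ 128 * ((q:ℝ) ^ (2 * r - 1)) * X ^ 2 := by
              apply mul_le_mul_of_nonneg_left hX2 (by positivity)
      have h9 : Ac ^ 4 / ((q:ℝ) ^ (2 * r - 1)) ≤ 128 * X ^ 2 := by
        rw [div_le_iff₀ hPpos]
        calc Ac ^ 4 ≤ 128 * ((q:ℝ) ^ (2 * r - 1)) * X ^ 2 := h8
          _ = 128 * X ^ 2 * (q:ℝ) ^ (2 * r - 1) := by ring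
      linarith [sq_nonneg X]
    have h6 : (1/16 : ℝ) * yt ≤ X := le_of_pow_le_pow_left₀ (by norm_num) hXnn hfin
    calc (1/16 : ℝ) * min xt yt ≤ (1/16) * yt := by
          apply mul_le_mul_of_nonneg_left (min_le_right _ _) (by norm_num)
      _ ≤ X := h6
end

section
/- Let q be an odd prime power and A ⊆ 𝔽_q. Then max{|A+A|, |A²+A²|} ≫ min{ q^{1/2}|A|^{1/2}, |A|²/q^{1/2} }. -/
open Finset Pointwise

variable {F : Type} [Field F] [DecidableEq F]

private def nn (A : Finset F) (p : F × F) : ℕ :=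
  ((A ×ˢ A).filter fun ac => p.2 = p.1 ^ 2 - 2 * ac.1 * p.1 + ac.1 ^ 2 + ac.2 ^ 2).card

private lemma line_card [Fintype F] (g : F → F) :
    ((univ : Finset (F × F)).filter fun p => p.2 = g p.1).card = Fintype.card F := by
  have h : ((univ : Finset (F × F)).filter fun p => p.2 = g p.1)
      = univ.image fun x : F => (x, g x) := by
    ext p
    simp only [mem_filter, mem_univ, true_and, mem_image]
    constructor
    · intro h
      exact ⟨p.1, Prod.ext rfl h.symm⟩
    · rintro ⟨x, rfl⟩
      rfl
  rw [h, Finset.card_image_of_injective _ fun x y hxy => congrArg Prod.fst hxy, card_univ]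

private lemma sum_nn [Fintype F] (A : Finset F) :
    ∑ p : F × F, nn A p = A.card ^ 2 * Fintype.card F := by
  unfold nn
  simp_rw [Finset.card_filter]
  rw [Finset.sum_comm]
  have h : ∀ ac ∈ A ×ˢ A,
      (∑ p : F × F, if p.2 = p.1 ^ 2 - 2 * ac.1 * p.1 + ac.1 ^ 2 + ac.2 ^ 2 then 1 else 0)
        = Fintype.card F := by
    intro ac _
    rw [← Finset.card_filter]
    exact line_card fun x => x ^ 2 - 2 * ac.1 * x + ac.1 ^ 2 + ac.2 ^ 2
  rw [Finset.sum_congr rfl h, Finset.sum_const, Finset.card_product, smul_eq_mul]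
  ring

private lemma inc_lower (A : Finset F) :
    A.card ^ 3 ≤ ∑ p ∈ ((A + A) ×ˢ ((A.image fun x => x ^ 2) + (A.image fun x => x ^ 2))),
      nn A p := by
  unfold nn
  simp_rw [Finset.card_filter]
  rw [Finset.sum_comm]
  have h : ∀ ac ∈ A ×ˢ A, A.card ≤
      ∑ p ∈ ((A + A) ×ˢ ((A.image fun x => x ^ 2) + (A.image fun x => x ^ 2))),
        if p.2 = p.1 ^ 2 - 2 * ac.1 * p.1 + ac.1 ^ 2 + ac.2 ^ 2 then 1 else 0 := by
    intro ac hac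
    rw [← Finset.card_filter]
    obtain ⟨ha1, ha2⟩ := Finset.mem_product.mp hac
    apply Finset.card_le_card_of_injOn (fun b => (ac.1 + b, ac.2 ^ 2 + b ^ 2))
    · intro b hb
      refine Finset.mem_filter.mpr ⟨Finset.mem_product.mpr ⟨?_, ?_⟩, by ring⟩
      · exact Finset.add_mem_add ha1 hb
      · exact Finset.add_mem_add (Finset.mem_image_of_mem _ ha2) (Finset.mem_image_of_mem _ hb)
    · intro b hb b' hb' hbb
      have h1 := congrArg Prod.fst hbb
      simpa using h1
  calc A.card ^ 3 = ∑ _ac ∈ A ×ˢ A, A.card := by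
        rw [Finset.sum_const, Finset.card_product, smul_eq_mul]; ring
    _ ≤ _ := Finset.sum_le_sum h

private lemma sq_line_card [Fintype F] (h2 : (2 : F) ≠ 0) (z : (F × F) × (F × F)) :
    ((univ : Finset (F × F)).filter fun p =>
        p.2 = p.1 ^ 2 - 2 * z.1.1 * p.1 + z.1.1 ^ 2 + z.1.2 ^ 2 ∧
        p.2 = p.1 ^ 2 - 2 * z.2.1 * p.1 + z.2.1 ^ 2 + z.2.2 ^ 2).card
      ≤ if z.1.1 = z.2.1 ∧ z.1.2 ^ 2 = z.2.2 ^ 2 then Fintype.card F else 1 := by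
  split_ifs with hcase
  · calc ((univ : Finset (F × F)).filter fun p =>
        p.2 = p.1 ^ 2 - 2 * z.1.1 * p.1 + z.1.1 ^ 2 + z.1.2 ^ 2 ∧
        p.2 = p.1 ^ 2 - 2 * z.2.1 * p.1 + z.2.1 ^ 2 + z.2.2 ^ 2).card
        ≤ ((univ : Finset (F × F)).filter fun p =>
          p.2 = p.1 ^ 2 - 2 * z.1.1 * p.1 + z.1.1 ^ 2 + z.1.2 ^ 2).card := by
          apply Finset.card_le_card
          intro p hp
          rw [Finset.mem_filter] at hp ⊢
          exact ⟨hp.1, hp.2.1⟩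
      _ = Fintype.card F := line_card fun x => x ^ 2 - 2 * z.1.1 * x + z.1.1 ^ 2 + z.1.2 ^ 2
  · rw [Finset.card_le_one]
    intro p hp p' hp'
    rw [Finset.mem_filter] at hp hp'
    obtain ⟨-, e1, e2⟩ := hp
    obtain ⟨-, e1', e2'⟩ := hp'
    have e : p.1 ^ 2 - 2 * z.1.1 * p.1 + z.1.1 ^ 2 + z.1.2 ^ 2
        = p.1 ^ 2 - 2 * z.2.1 * p.1 + z.2.1 ^ 2 + z.2.2 ^ 2 := e1.symm.trans e2
    have e' : p'.1 ^ 2 - 2 * z.1.1 * p'.1 + z.1.1 ^ 2 + z.1.2 ^ 2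
        = p'.1 ^ 2 - 2 * z.2.1 * p'.1 + z.2.1 ^ 2 + z.2.2 ^ 2 := e1'.symm.trans e2'
    by_cases ha : z.1.1 = z.2.1
    · exfalso
      apply hcase
      refine ⟨ha, ?_⟩
      rw [← ha] at e
      linear_combination e
    · have hdiff : (2 * (z.2.1 - z.1.1)) * (p.1 - p'.1) = 0 := by linear_combination e - e'
      have hne : (2 * (z.2.1 - z.1.1)) ≠ 0 :=
        mul_ne_zero h2 (sub_ne_zero.mpr fun hh => ha hh.symm)
      have hx : p.1 = p'.1 := sub_eq_zero.mp ((mul_eq_zero.mp hdiff).resolve_left hne)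
      refine Prod.ext hx ?_
      rw [e1, e1', hx]

private lemma Dbound (A : Finset F) :
    (((A ×ˢ A) ×ˢ (A ×ˢ A)).filter fun z => z.1.1 = z.2.1 ∧ z.1.2 ^ 2 = z.2.2 ^ 2).card
      ≤ 2 * A.card ^ 2 := by
  have hneg : ∀ x c : F, x ^ 2 = c ^ 2 → x ≠ c → x = -c := by
    intro x c hx hne
    have h0 : (x - c) * (x + c) = 0 := by linear_combination hx
    rcases mul_eq_zero.mp h0 with h | h
    · exact absurd (sub_eq_zero.mp h) hne
    · exact eq_neg_of_add_eq_zero_left h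
  have key : (((A ×ˢ A) ×ˢ (A ×ˢ A)).filter
        fun z => z.1.1 = z.2.1 ∧ z.1.2 ^ 2 = z.2.2 ^ 2).card
      ≤ ((A ×ˢ A) ×ˢ (univ : Finset Bool)).card := by
    apply Finset.card_le_card_of_injOn (fun z => (z.1, decide (z.2.2 = z.1.2)))
    · intro z hz
      rw [Finset.mem_coe, Finset.mem_filter] at hz
      exact Finset.mem_product.mpr ⟨(Finset.mem_product.mp hz.1).1, Finset.mem_univ _⟩
    · intro z hz w hw hzw
      simp only [Finset.coe_filter, Set.mem_setOf_eq] at hz hw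
      obtain ⟨hz1, hza, hzc⟩ := hz
      obtain ⟨hw1, hwa, hwc⟩ := hw
      have hzw' : (z.1, decide (z.2.2 = z.1.2)) = (w.1, decide (w.2.2 = w.1.2)) := hzw
      have h1 : z.1 = w.1 := (Prod.ext_iff.mp hzw').1
      have hb : (decide (z.2.2 = z.1.2) : Bool) = decide (w.2.2 = w.1.2) :=
        (Prod.ext_iff.mp hzw').2
      have h21 : z.2.1 = w.2.1 := by rw [← hza, ← hwa, h1]
      have h12 : z.1.2 = w.1.2 := congrArg Prod.snd h1
      have h22 : z.2.2 = w.2.2 := by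
        by_cases hc : z.2.2 = z.1.2
        · have : decide (w.2.2 = w.1.2) = true := by rw [← hb]; simpa using hc
          have hc' : w.2.2 = w.1.2 := of_decide_eq_true this
          rw [hc, hc', h12]
        · have : decide (w.2.2 = w.1.2) = false := by rw [← hb]; simpa using hc
          have hc' : ¬ (w.2.2 = w.1.2) := of_decide_eq_false this
          have hz2 : z.2.2 = -z.1.2 := hneg _ _ (by rw [hzc]) hc
          have hw2 : w.2.2 = -w.1.2 := hneg _ _ (by rw [hwc]) hc'
          rw [hz2, hw2, h12]
      rw [Prod.ext h1 (Prod.ext h21 h22)]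
  calc _ ≤ ((A ×ˢ A) ×ˢ (univ : Finset Bool)).card := key
    _ = 2 * A.card ^ 2 := by
        rw [Finset.card_product, Finset.card_product, card_univ]
        simp [Fintype.card_bool]
        ring

private lemma sum_nn_sq [Fintype F] (A : Finset F) (h2 : (2 : F) ≠ 0) :
    ∑ p : F × F, nn A p ^ 2 ≤ A.card ^ 4 + 2 * A.card ^ 2 * Fintype.card F := by
  have key : ∀ p : F × F, nn A p ^ 2 =
      ∑ z ∈ (A ×ˢ A) ×ˢ (A ×ˢ A),
        if p.2 = p.1 ^ 2 - 2 * z.1.1 * p.1 + z.1.1 ^ 2 + z.1.2 ^ 2 ∧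
           p.2 = p.1 ^ 2 - 2 * z.2.1 * p.1 + z.2.1 ^ 2 + z.2.2 ^ 2 then 1 else 0 := by
    intro p
    rw [sq, nn, Finset.card_filter, Finset.sum_mul_sum]
    rw [← Finset.sum_product']
    apply Finset.sum_congr rfl
    intro z _
    by_cases hx : p.2 = p.1 ^ 2 - 2 * z.1.1 * p.1 + z.1.1 ^ 2 + z.1.2 ^ 2 <;>
      by_cases hy : p.2 = p.1 ^ 2 - 2 * z.2.1 * p.1 + z.2.1 ^ 2 + z.2.2 ^ 2 <;>
      simp [hx, hy]
  simp_rw [key]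
  rw [Finset.sum_comm]
  have hbound : ∀ z ∈ (A ×ˢ A) ×ˢ (A ×ˢ A),
      (∑ p : F × F,
        if p.2 = p.1 ^ 2 - 2 * z.1.1 * p.1 + z.1.1 ^ 2 + z.1.2 ^ 2 ∧
           p.2 = p.1 ^ 2 - 2 * z.2.1 * p.1 + z.2.1 ^ 2 + z.2.2 ^ 2 then 1 else 0)
      ≤ if z.1.1 = z.2.1 ∧ z.1.2 ^ 2 = z.2.2 ^ 2 then Fintype.card F else 1 := by
    intro z _
    rw [← Finset.card_filter]
    exact sq_line_card h2 z
  calc _ ≤ ∑ z ∈ (A ×ˢ A) ×ˢ (A ×ˢ A),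
        (if z.1.1 = z.2.1 ∧ z.1.2 ^ 2 = z.2.2 ^ 2 then Fintype.card F else 1) :=
        Finset.sum_le_sum hbound
    _ ≤ A.card ^ 4 + 2 * A.card ^ 2 * Fintype.card F := by
        rw [Finset.sum_ite, Finset.sum_const, Finset.sum_const, smul_eq_mul, smul_eq_mul,
          mul_one]
        have b1 : (((A ×ˢ A) ×ˢ (A ×ˢ A)).filter
              fun z => z.1.1 = z.2.1 ∧ z.1.2 ^ 2 = z.2.2 ^ 2).card * Fintype.card F
            ≤ 2 * A.card ^ 2 * Fintype.card F :=
          Nat.mul_le_mul_right _ (Dbound A)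
        have b2 : (((A ×ˢ A) ×ˢ (A ×ˢ A)).filter
              fun z => ¬ (z.1.1 = z.2.1 ∧ z.1.2 ^ 2 = z.2.2 ^ 2)).card ≤ A.card ^ 4 := by
          refine le_trans (Finset.card_filter_le _ _) (le_of_eq ?_)
          simp [Finset.card_product]
          ring
        linarith

theorem stmt_15 :
    ∃ c : ℝ, 0 < c ∧
      ∀ (F : Type) [Field F] [Fintype F] [DecidableEq F],
        Odd (Fintype.card F) →
        ∀ A : Finset F,
          c * min ((Fintype.card F : ℝ) ^ ((1 : ℝ) / 2) * (A.card : ℝ) ^ ((1 : ℝ) / 2))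
              ((A.card : ℝ) ^ 2 / (Fintype.card F : ℝ) ^ ((1 : ℝ) / 2))
            ≤ max (((A + A).card : ℝ))
                ((((A.image fun a => a ^ 2) + (A.image fun a => a ^ 2)).card : ℝ)) := by
  refine ⟨1/4, by norm_num, ?_⟩
  intro F _ _ _ hodd A
  have h2 : (2 : F) ≠ 0 := by
    intro h
    have h' : ((2 : ℕ) : F) = 0 := by exact_mod_cast h
    have hd : ringChar F ∣ 2 := (CharP.cast_eq_zero_iff F (ringChar F) 2).mp h'
    have hp : (ringChar F).Prime := CharP.char_is_prime F (ringChar F)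
    have hchar : ringChar F = 2 := (Nat.prime_dvd_prime_iff_eq hp Nat.prime_two).mp hd
    have heven : Fintype.card F % 2 = 0 := FiniteField.even_card_of_char_two hchar
    rw [Nat.odd_iff] at hodd
    omega
  simp only [← Real.sqrt_eq_rpow]
  have hn1 := sum_nn A
  have hn2 := sum_nn_sq A h2
  have hn3 := inc_lower A
  set S : Finset F := A + A with hS
  set T : Finset F := (A.image fun a => a ^ 2) + (A.image fun a => a ^ 2) with hT
  have r1 : ∑ p : F × F, (nn A p : ℝ) = (A.card : ℝ) ^ 2 * (Fintype.card F : ℝ) := by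
    exact_mod_cast hn1
  have r2 : ∑ p : F × F, (nn A p : ℝ) ^ 2
      ≤ (A.card : ℝ) ^ 4 + 2 * (A.card : ℝ) ^ 2 * (Fintype.card F : ℝ) := by
    exact_mod_cast hn2
  have r3 : (A.card : ℝ) ^ 3 ≤ ∑ p ∈ S ×ˢ T, (nn A p : ℝ) := by exact_mod_cast hn3
  set q' : ℝ := (Fintype.card F : ℝ) with hq'
  set a' : ℝ := (A.card : ℝ) with ha'
  have hq0 : (0 : ℝ) < q' := by
    rw [hq']; exact_mod_cast Fintype.card_pos
  have hM0 : (0:ℝ) ≤ max ((S.card : ℝ)) ((T.card : ℝ)) :=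
    le_max_of_le_left (Nat.cast_nonneg _)
  rcases Nat.eq_zero_or_pos A.card with h0 | hpos
  · have ha0 : a' = 0 := by rw [ha', h0]; norm_num
    rw [ha0]
    simp only [Real.sqrt_zero, mul_zero, ne_eq, OfNat.ofNat_ne_zero, not_false_eq_true,
      zero_pow, zero_div, min_self]
    exact hM0
  -- main case
  have ha1 : (1:ℝ) ≤ a' := by rw [ha']; exact_mod_cast hpos
  have ha0 : (0:ℝ) < a' := lt_of_lt_of_le one_pos ha1
  set P : ℝ := (S.card : ℝ) * (T.card : ℝ) with hPdef
  have hP0 : (0:ℝ) ≤ P := by positivity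
  have hcardE : ((S ×ˢ T).card : ℝ) = P := by
    rw [Finset.card_product]; push_cast; rw [hPdef]
  have hq'ne : q' ≠ 0 := ne_of_gt hq0
  have hdev_eq : ∑ p : F × F, ((nn A p : ℝ) - a' ^ 2 / q') ^ 2
      = (∑ p : F × F, (nn A p : ℝ) ^ 2) - (a' ^ 2) ^ 2 := by
    have expand : ∀ p : F × F, ((nn A p : ℝ) - a' ^ 2 / q') ^ 2
        = (nn A p : ℝ) ^ 2 - (2 * (a' ^ 2 / q')) * (nn A p : ℝ) + (a' ^ 2 / q') ^ 2 :=
      fun p => by ring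
    rw [Finset.sum_congr rfl fun p _ => expand p]
    rw [Finset.sum_add_distrib, Finset.sum_sub_distrib, ← Finset.mul_sum, r1,
      Finset.sum_const, card_univ, nsmul_eq_mul]
    have hcard : (Fintype.card (F × F) : ℝ) = q' * q' := by
      rw [Fintype.card_prod]; push_cast; rw [hq']
    rw [hcard]
    field_simp
    ring
  have hdev : ∑ p : F × F, ((nn A p : ℝ) - a' ^ 2 / q') ^ 2 ≤ 2 * a' ^ 2 * q' := by
    rw [hdev_eq]
    have he : (a' ^ 2) ^ 2 = a' ^ 4 := by ring
    linarith
  have hsplit : ∑ p ∈ S ×ˢ T, (nn A p : ℝ)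
      = (∑ p ∈ S ×ˢ T, ((nn A p : ℝ) - a' ^ 2 / q')) + P * (a' ^ 2 / q') := by
    rw [Finset.sum_sub_distrib, Finset.sum_const, nsmul_eq_mul, hcardE]
    ring
  have hCS : (∑ p ∈ S ×ˢ T, ((nn A p : ℝ) - a' ^ 2 / q')) ^ 2 ≤ P * (2 * a' ^ 2 * q') := by
    have h := Finset.sum_mul_sq_le_sq_mul_sq (S ×ˢ T) (fun _ => (1:ℝ))
      (fun p => (nn A p : ℝ) - a' ^ 2 / q')
    simp only [one_mul, one_pow] at h
    have h4 : ∑ p ∈ S ×ˢ T, ((nn A p : ℝ) - a' ^ 2 / q') ^ 2 ≤ 2 * a' ^ 2 * q' :=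
      le_trans (Finset.sum_le_sum_of_subset_of_nonneg (Finset.subset_univ _)
        fun p _ _ => sq_nonneg _) hdev
    have h5 : (∑ _p ∈ S ×ˢ T, (1:ℝ)) = P := by
      rw [Finset.sum_const, nsmul_eq_mul, mul_one, hcardE]
    rw [h5] at h
    exact h.trans (mul_le_mul_of_nonneg_left h4 hP0)
  have key : q' * a' / 2 ≤ P ∨ a' ^ 4 / (8 * q') ≤ P := by
    by_contra hcon
    push_neg at hcon
    obtain ⟨k1, k2⟩ := hcon
    have hc2 : (0:ℝ) < a' ^ 2 / q' := div_pos (pow_pos ha0 2) hq0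
    have e1 : P * (a' ^ 2 / q') < a' ^ 3 / 2 := by
      calc P * (a' ^ 2 / q') < (q' * a' / 2) * (a' ^ 2 / q') :=
            mul_lt_mul_of_pos_right k1 hc2
        _ = a' ^ 3 / 2 := by field_simp
    have e2 : a' ^ 3 / 2 < ∑ p ∈ S ×ˢ T, ((nn A p : ℝ) - a' ^ 2 / q') := by
      rw [hsplit] at r3
      linarith
    have e4 : (a' ^ 3 / 2) ^ 2 < (∑ p ∈ S ×ˢ T, ((nn A p : ℝ) - a' ^ 2 / q')) ^ 2 :=
      pow_lt_pow_left₀ e2 (by positivity) two_ne_zero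
    have e5 : P * (2 * a' ^ 2 * q') < a' ^ 6 / 4 := by
      calc P * (2 * a' ^ 2 * q') < (a' ^ 4 / (8 * q')) * (2 * a' ^ 2 * q') :=
            mul_lt_mul_of_pos_right k2 (by positivity)
        _ = a' ^ 6 / 4 := by field_simp; ring
    have e6 : (a' ^ 3 / 2) ^ 2 = a' ^ 6 / 4 := by ring
    linarith
  have hPM : P ≤ (max ((S.card : ℝ)) ((T.card : ℝ))) ^ 2 := by
    rw [sq]
    exact mul_le_mul (le_max_left _ _) (le_max_right _ _) (Nat.cast_nonneg _) hM0
  have hfinish : ∀ x : ℝ, 0 ≤ x → x ^ 2 ≤ (max ((S.card : ℝ)) ((T.card : ℝ))) ^ 2 →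
      x ≤ max ((S.card : ℝ)) ((T.card : ℝ)) := by
    intro x hx hx2
    calc x = Real.sqrt (x ^ 2) := (Real.sqrt_sq hx).symm
      _ ≤ Real.sqrt ((max ((S.card : ℝ)) ((T.card : ℝ))) ^ 2) := Real.sqrt_le_sqrt hx2
      _ = _ := Real.sqrt_sq hM0
  rcases key with hk | hk
  · have hmin : min (Real.sqrt q' * Real.sqrt a') (a' ^ 2 / Real.sqrt q')
        ≤ Real.sqrt q' * Real.sqrt a' := min_le_left _ _
    have hsq : ((1:ℝ)/4 * (Real.sqrt q' * Real.sqrt a')) ^ 2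
        ≤ (max ((S.card : ℝ)) ((T.card : ℝ))) ^ 2 := by
      have e : ((1:ℝ)/4 * (Real.sqrt q' * Real.sqrt a')) ^ 2 = 1/16 * (q' * a') := by
        rw [mul_pow, mul_pow, Real.sq_sqrt hq0.le, Real.sq_sqrt ha0.le]
        norm_num
      rw [e]
      have hqa : (0:ℝ) ≤ q' * a' := by positivity
      linarith
    have hfin := hfinish _ (by positivity) hsq
    calc (1:ℝ)/4 * min (Real.sqrt q' * Real.sqrt a') (a' ^ 2 / Real.sqrt q')
        ≤ 1/4 * (Real.sqrt q' * Real.sqrt a') := by linarith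
      _ ≤ _ := hfin
  · have hmin : min (Real.sqrt q' * Real.sqrt a') (a' ^ 2 / Real.sqrt q')
        ≤ a' ^ 2 / Real.sqrt q' := min_le_right _ _
    have hsq : ((1:ℝ)/4 * (a' ^ 2 / Real.sqrt q')) ^ 2
        ≤ (max ((S.card : ℝ)) ((T.card : ℝ))) ^ 2 := by
      have e : ((1:ℝ)/4 * (a' ^ 2 / Real.sqrt q')) ^ 2 = 1/16 * (a' ^ 4 / q') := by
        rw [show ((1:ℝ)/4 * (a' ^ 2 / Real.sqrt q')) ^ 2
          = 1/16 * (a' ^ 2) ^ 2 / (Real.sqrt q' ^ 2) from by ring, Real.sq_sqrt hq0.le]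
        ring
      rw [e]
      have e2 : a' ^ 4 / (8 * q') = 1/8 * (a' ^ 4 / q') := by ring
      have h8 : (0:ℝ) ≤ a' ^ 4 / q' := by positivity
      linarith
    have hfin := hfinish _ (by positivity) hsq
    calc (1:ℝ)/4 * min (Real.sqrt q' * Real.sqrt a') (a' ^ 2 / Real.sqrt q')
        ≤ 1/4 * (a' ^ 2 / Real.sqrt q') := by linarith
      _ ≤ _ := hfin
end

section
/- Let p be an odd prime, r ≥ 1, and A ⊆ ℤ/p^rℤ with |A| ≥ 2p^{r-1}. Then max{|A+A|, |A²+A²|} ≫ min{ p^{r/2}|A|^{1/2}, |A|²/p^{(2r-1)/2} }. -/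
open Finset Pointwise

namespace SP19


/-- 1-D box count: elements of `ZMod (p^r)` congruent to `c` mod `p^i`. -/
lemma oneD {p r : ℕ} [NeZero (p ^ r)] (hp : 0 < p) {i : ℕ} (hir : i ≤ r)
    (c : ZMod (p ^ r)) :
    ((univ : Finset (ZMod (p ^ r))).filter (fun x => p ^ i ∣ (x - c).val)).card
      ≤ p ^ (r - i) := by
  have hpi : 0 < p ^ i := pow_pos hp i
  calc ((univ : Finset (ZMod (p ^ r))).filter (fun x => p ^ i ∣ (x - c).val)).card
      ≤ (Finset.range (p ^ (r - i))).card := by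
        apply Finset.card_le_card_of_injOn (fun x => (x - c).val / p ^ i)
        · intro x hx
          rw [Finset.mem_coe, Finset.mem_range]
          apply Nat.div_lt_of_lt_mul
          calc (x - c).val < p ^ r := ZMod.val_lt _
            _ = p ^ i * p ^ (r - i) := by rw [← pow_add]; congr 1; omega
        · intro x hx y hy hxy
          simp only [coe_filter, Set.mem_setOf_eq, mem_univ, true_and] at hx hy
          have ex : p ^ i * ((x - c).val / p ^ i) = (x - c).val := Nat.mul_div_cancel' hx
          have ey : p ^ i * ((y - c).val / p ^ i) = (y - c).val := Nat.mul_div_cancel' hy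
          have hv : (x - c).val = (y - c).val := by
            rw [← ex, ← ey]; simp only [hxy]
          have := ZMod.val_injective _ hv
          exact sub_left_inj.mp this
    _ = p ^ (r - i) := Finset.card_range _

/-- 2-D box count. -/
lemma twoD {p r : ℕ} [NeZero (p ^ r)] (hp : 0 < p) {i : ℕ} (hir : i ≤ r)
    (v : ZMod (p ^ r) × ZMod (p ^ r)) :
    ((univ : Finset (ZMod (p ^ r) × ZMod (p ^ r))).filter
        (fun u => p ^ i ∣ (u.1 - v.1).val ∧ p ^ i ∣ (u.2 - v.2).val)).card
      ≤ p ^ (r - i) * p ^ (r - i) := by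
  classical
  set F1 := (univ : Finset (ZMod (p ^ r))).filter (fun x => p ^ i ∣ (x - v.1).val)
  set F2 := (univ : Finset (ZMod (p ^ r))).filter (fun x => p ^ i ∣ (x - v.2).val)
  have hsub : ((univ : Finset (ZMod (p ^ r) × ZMod (p ^ r))).filter
      (fun u => p ^ i ∣ (u.1 - v.1).val ∧ p ^ i ∣ (u.2 - v.2).val)) ⊆ F1 ×ˢ F2 := by
    intro u hu
    simp only [mem_filter, mem_univ, true_and] at hu
    simp only [mem_product, F1, F2, mem_filter, mem_univ, true_and]
    exact hu
  calc _ ≤ (F1 ×ˢ F2).card := Finset.card_le_card hsub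
    _ = F1.card * F2.card := Finset.card_product _ _
    _ ≤ p ^ (r - i) * p ^ (r - i) :=
        Nat.mul_le_mul (oneD hp hir v.1) (oneD hp hir v.2)

lemma mono_aux (g : ℕ → ℕ) (hg : ∀ i, g i ≤ g (i + 1)) : Monotone g :=
  monotone_nat_of_le_succ hg

/-- telescoping sum, increasing version -/
lemma tele_inc (g : ℕ → ℕ) (hg : ∀ i, g i ≤ g (i + 1)) (n : ℕ) :
    ∑ i ∈ range n, (g (i + 1) - g i) = g n - g 0 := by
  induction n with
  | zero => simp
  | succ n ih =>
      rw [Finset.sum_range_succ, ih]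
      have h1 : g 0 ≤ g n := mono_aux g hg (Nat.zero_le n)
      have h2 : g n ≤ g (n + 1) := hg n
      omega

/-- telescoping sum, decreasing version -/
lemma tele_dec (g : ℕ → ℕ) (hg : ∀ i, g (i + 1) ≤ g i) (n : ℕ) :
    ∑ i ∈ range n, (g i - g (i + 1)) = g 0 - g n := by
  induction n with
  | zero => simp
  | succ n ih =>
      rw [Finset.sum_range_succ, ih]
      have h1 : g n ≤ g 0 := by
        have : Antitone g := antitone_nat_of_succ_le hg
        exact this (Nat.zero_le n)
      have h2 : g (n + 1) ≤ g n := hg n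
      omega



lemma mul_eq_zero_iff_val {p r : ℕ} [NeZero (p ^ r)] (a b : ZMod (p ^ r)) :
    a * b = 0 ↔ p ^ r ∣ a.val * b.val := by
  rw [← ZMod.val_eq_zero, ZMod.val_mul, ← Nat.dvd_iff_mod_eq_zero]

/-- Main solution-count bound: number of `m` with `m * δ₁ = δ₂`, for `(δ₁,δ₂) ≠ 0`. -/
lemma N_le {p r : ℕ} [NeZero (p ^ r)] (hp : p.Prime) (hr : 1 ≤ r)
    (δ₁ δ₂ : ZMod (p ^ r)) (hδ : ¬(δ₁ = 0 ∧ δ₂ = 0)) :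
    ((univ : Finset (ZMod (p ^ r))).filter (fun m => m * δ₁ = δ₂)).card
      ≤ 1 + ∑ i ∈ range (r - 1), (p ^ (i + 1) - p ^ i) *
          (if p ^ (i + 1) ∣ δ₁.val ∧ p ^ (i + 1) ∣ δ₂.val then 1 else 0) := by
  classical
  haveI : Fact p.Prime := ⟨hp⟩
  have hp1 : 1 < p := hp.one_lt
  have hp0 : 0 < p := hp.pos
  by_cases h1 : δ₁ = 0
  · -- condition is 0 = δ₂, false since δ₂ ≠ 0
    have h2 : δ₂ ≠ 0 := fun h => hδ ⟨h1, h⟩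
    have : ((univ : Finset (ZMod (p ^ r))).filter (fun m => m * δ₁ = δ₂)) = ∅ := by
      apply Finset.filter_false_of_mem
      intro m _
      rw [h1, mul_zero]
      exact fun h => h2 h.symm
    rw [this]; simp
  · -- δ₁ ≠ 0
    by_cases hsol : ∃ m₀ : ZMod (p ^ r), m₀ * δ₁ = δ₂
    swap
    · have : ((univ : Finset (ZMod (p ^ r))).filter (fun m => m * δ₁ = δ₂)) = ∅ := by
        apply Finset.filter_false_of_mem
        intro m _
        exact fun h => hsol ⟨m, h⟩
      rw [this]; simp
    obtain ⟨m₀, hm₀⟩ := hsol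
    have hv1 : δ₁.val ≠ 0 := fun h => h1 (ZMod.val_injective _ (by simpa using h))
    set j := padicValNat p δ₁.val with hj
    have hpj : p ^ j ∣ δ₁.val := pow_padicValNat_dvd
    have hjr : j < r := by
      have h1' : p ^ j ≤ δ₁.val := Nat.le_of_dvd (Nat.pos_of_ne_zero hv1) hpj
      have h2' : δ₁.val < p ^ r := ZMod.val_lt _
      exact (Nat.pow_lt_pow_iff_right hp1).mp (lt_of_le_of_lt h1' h2')
    -- p^j divides δ₂.val
    have hd2 : p ^ j ∣ δ₂.val := by
      have : δ₂.val = m₀.val * δ₁.val % p ^ r := by rw [← hm₀, ZMod.val_mul]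
      rw [this, Nat.dvd_mod_iff (pow_dvd_pow p hjr.le)]
      exact Dvd.dvd.mul_left hpj _
    -- d = δ₁.val / p^j is coprime to p
    set d := δ₁.val / p ^ j with hd
    have hdd : p ^ j * d = δ₁.val := Nat.mul_div_cancel' hpj
    have hpd : ¬ p ∣ d := by
      intro hcon
      obtain ⟨e, he⟩ := hcon
      have : p ^ (j + 1) ∣ δ₁.val := ⟨e, by rw [← hdd, he, pow_succ]; ring⟩
      exact pow_succ_padicValNat_not_dvd hv1 this
    -- card ≤ p^j via translation into annihilator
    have hcard : ((univ : Finset (ZMod (p ^ r))).filter (fun m => m * δ₁ = δ₂)).card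
        ≤ p ^ j := by
      have hone := oneD (p := p) (r := r) hp0 (i := r - j) (by omega) (0 : ZMod (p ^ r))
      have hrj : r - (r - j) = j := by omega
      rw [hrj] at hone
      refine le_trans ?_ hone
      apply Finset.card_le_card_of_injOn (fun m => m - m₀)
      · intro m hm
        simp only [Finset.mem_coe, mem_filter, mem_univ, true_and] at hm ⊢
        rw [sub_zero]
        -- (m - m₀) * δ₁ = 0
        have hz : (m - m₀) * δ₁ = 0 := by rw [sub_mul, hm, hm₀, sub_self]
        rw [mul_eq_zero_iff_val] at hz
        -- p^r ∣ (m-m₀).val * δ₁.val = (m-m₀).val * (p^j * d)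
        rw [← hdd] at hz
        have hz2 : p ^ (r - j) * p ^ j ∣ ((m - m₀).val * d) * p ^ j := by
          rw [← pow_add]
          have : r - j + j = r := by omega
          rw [this]
          calc p ^ r ∣ (m - m₀).val * (p ^ j * d) := hz
            _ = (m - m₀).val * d * p ^ j := by ring
        have hz3 : p ^ (r - j) ∣ (m - m₀).val * d :=
          (Nat.mul_dvd_mul_iff_right (pow_pos hp0 j)).mp hz2
        exact (Nat.Coprime.pow_left _ (hp.coprime_iff_not_dvd.mpr hpd)).dvd_of_dvd_mul_right hz3
      · intro x _ y _ hxy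
        exact sub_left_inj.mp hxy
    refine le_trans hcard ?_
    -- RHS ≥ p^j
    have htel : ∑ i ∈ range j, (p ^ (i + 1) - p ^ i) = p ^ j - 1 := by
      have := tele_inc (fun i => p ^ i) (fun i => Nat.pow_le_pow_right hp0 (by omega)) j
      simpa using this
    have hsum : ∑ i ∈ range j, (p ^ (i + 1) - p ^ i) *
          (if p ^ (i + 1) ∣ δ₁.val ∧ p ^ (i + 1) ∣ δ₂.val then 1 else 0)
        = p ^ j - 1 := by
      rw [← htel]
      apply Finset.sum_congr rfl
      intro i hi
      rw [Finset.mem_range] at hi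
      have hij : i + 1 ≤ j := hi
      have hdvd1 : p ^ (i + 1) ∣ δ₁.val := (pow_dvd_pow p hij).trans hpj
      have hdvd2 : p ^ (i + 1) ∣ δ₂.val := (pow_dvd_pow p hij).trans hd2
      rw [if_pos ⟨hdvd1, hdvd2⟩, mul_one]
    have hsub : ∑ i ∈ range j, (p ^ (i + 1) - p ^ i) *
          (if p ^ (i + 1) ∣ δ₁.val ∧ p ^ (i + 1) ∣ δ₂.val then 1 else 0)
        ≤ ∑ i ∈ range (r - 1), (p ^ (i + 1) - p ^ i) *
          (if p ^ (i + 1) ∣ δ₁.val ∧ p ^ (i + 1) ∣ δ₂.val then 1 else 0) := by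
      apply Finset.sum_le_sum_of_subset_of_nonneg
      · apply Finset.range_subset_range.mpr; omega
      · intro i _ _; exact Nat.zero_le _
    have hpj1 : 1 ≤ p ^ j := Nat.one_le_pow _ _ hp0
    omega


/-- fiberwise: sum of squared fiber sizes equals pairs with equal value -/
lemma sq_fiber {α β : Type*} [DecidableEq α] [DecidableEq β] [Fintype β]
    (P : Finset α) (g : α → β) :
    ∑ k ∈ (univ : Finset β), ((P.filter (fun a => g a = k)).card) ^ 2
      = ((P ×ˢ P).filter (fun w => g w.1 = g w.2)).card := by
  classical
  rw [Finset.card_eq_sum_card_fiberwise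
    (f := fun w : α × α => g w.1) (t := univ) (fun x _ => mem_univ _)]
  apply Finset.sum_congr rfl
  intro k _
  have hset : ((P ×ˢ P).filter (fun w => g w.1 = g w.2)).filter (fun w => g w.1 = k)
      = (P.filter (fun a => g a = k)) ×ˢ (P.filter (fun a => g a = k)) := by
    ext w
    simp only [mem_filter, mem_product]
    constructor
    · rintro ⟨⟨⟨h1, h2⟩, h3⟩, h4⟩
      exact ⟨⟨h1, h4⟩, ⟨h2, by rw [← h3]; exact h4⟩⟩
    · rintro ⟨⟨h1, h2⟩, h3, h4⟩
      exact ⟨⟨⟨h1, h3⟩, by rw [h2, h4]⟩, h2⟩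
  rw [hset, Finset.card_product]
  ring

/-- The key second moment bound. -/
lemma KB {p r : ℕ} [NeZero (p ^ r)] (hp : p.Prime) (hr : 1 ≤ r)
    (P : Finset (ZMod (p ^ r) × ZMod (p ^ r))) :
    ∑ mk ∈ (univ : Finset (ZMod (p ^ r) × ZMod (p ^ r))),
        ((P.filter (fun pt => pt.2 - mk.1 * pt.1 = mk.2)).card) ^ 2
      ≤ P.card ^ 2 + p ^ (2 * r - 1) * P.card := by
  classical
  have hp0 : 0 < p := hp.pos
  have stepAB : ∑ mk ∈ (univ : Finset (ZMod (p ^ r) × ZMod (p ^ r))),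
        ((P.filter (fun pt => pt.2 - mk.1 * pt.1 = mk.2)).card) ^ 2
      = ∑ m ∈ (univ : Finset (ZMod (p ^ r))),
          (((P ×ˢ P).filter (fun w => m * (w.1.1 - w.2.1) = w.1.2 - w.2.2)).card) := by
    rw [← Finset.univ_product_univ, Finset.sum_product]
    apply Finset.sum_congr rfl
    intro m _
    rw [sq_fiber P (fun pt => pt.2 - m * pt.1)]
    congr 1
    apply Finset.filter_congr
    intro w _
    constructor
    · intro h; linear_combination -h
    · intro h; linear_combination -h
  rw [stepAB]
  have stepC : ∑ m ∈ (univ : Finset (ZMod (p ^ r))),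
        (((P ×ˢ P).filter (fun w => m * (w.1.1 - w.2.1) = w.1.2 - w.2.2)).card)
      = ∑ w ∈ P ×ˢ P,
          (((univ : Finset (ZMod (p ^ r))).filter
            (fun m => m * (w.1.1 - w.2.1) = w.1.2 - w.2.2)).card) := by
    simp only [Finset.card_filter]
    rw [Finset.sum_comm]
  rw [stepC]
  rw [← Finset.sum_filter_add_sum_filter_not (P ×ˢ P) (fun w => w.1 = w.2)]
  set dc := ((P ×ˢ P).filter (fun w => w.1 = w.2)).card with hdc
  set oc := ((P ×ˢ P).filter (fun w => ¬ w.1 = w.2)).card with hoc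
  -- diagonal part
  have hdiag : ∑ w ∈ (P ×ˢ P).filter (fun w => w.1 = w.2),
      (((univ : Finset (ZMod (p ^ r))).filter
        (fun m => m * (w.1.1 - w.2.1) = w.1.2 - w.2.2)).card)
      ≤ p ^ r * P.card := by
    have hcard : ∀ w ∈ (P ×ˢ P).filter (fun w => w.1 = w.2),
        (((univ : Finset (ZMod (p ^ r))).filter
          (fun m => m * (w.1.1 - w.2.1) = w.1.2 - w.2.2)).card) = p ^ r := by
      intro w hw
      simp only [mem_filter] at hw
      rw [hw.2]
      simp only [sub_self, mul_zero]
      simp [ZMod.card]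
    rw [Finset.sum_congr rfl hcard, Finset.sum_const, smul_eq_mul]
    have hb : ((P ×ˢ P).filter (fun w => w.1 = w.2)).card ≤ P.card := by
      apply Finset.card_le_card_of_injOn (fun w => w.1)
      · intro w hw
        simp only [Finset.mem_coe, mem_filter, mem_product] at hw
        exact hw.1.1
      · intro w hw w' hw' h
        rw [Finset.mem_coe, Finset.mem_filter] at hw hw'
        exact Prod.ext h (by rw [← hw.2, ← hw'.2]; exact h)
    calc ((P ×ˢ P).filter (fun w => w.1 = w.2)).card * p ^ r
        ≤ P.card * p ^ r := Nat.mul_le_mul_right _ hb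
      _ = p ^ r * P.card := Nat.mul_comm _ _
  -- off-diagonal part
  have hoff : ∑ w ∈ (P ×ˢ P).filter (fun w => ¬ w.1 = w.2),
      (((univ : Finset (ZMod (p ^ r))).filter
        (fun m => m * (w.1.1 - w.2.1) = w.1.2 - w.2.2)).card)
      ≤ oc + P.card * (p ^ (2 * r - 1) - p ^ r) := by
    have hNle : ∀ w ∈ (P ×ˢ P).filter (fun w => ¬ w.1 = w.2),
        (((univ : Finset (ZMod (p ^ r))).filter
          (fun m => m * (w.1.1 - w.2.1) = w.1.2 - w.2.2)).card)
        ≤ 1 + ∑ i ∈ range (r - 1), (p ^ (i + 1) - p ^ i) *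
            (if p ^ (i + 1) ∣ (w.1.1 - w.2.1).val ∧ p ^ (i + 1) ∣ (w.1.2 - w.2.2).val
              then 1 else 0) := by
      intro w hw
      simp only [mem_filter] at hw
      apply N_le hp hr
      rintro ⟨ha, hb⟩
      exact hw.2 (Prod.ext (by rwa [sub_eq_zero] at ha) (by rwa [sub_eq_zero] at hb))
    calc ∑ w ∈ (P ×ˢ P).filter (fun w => ¬ w.1 = w.2),
        (((univ : Finset (ZMod (p ^ r))).filter
          (fun m => m * (w.1.1 - w.2.1) = w.1.2 - w.2.2)).card)
        ≤ ∑ w ∈ (P ×ˢ P).filter (fun w => ¬ w.1 = w.2),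
            (1 + ∑ i ∈ range (r - 1), (p ^ (i + 1) - p ^ i) *
              (if p ^ (i + 1) ∣ (w.1.1 - w.2.1).val ∧ p ^ (i + 1) ∣ (w.1.2 - w.2.2).val
                then 1 else 0)) := Finset.sum_le_sum hNle
      _ = oc + ∑ w ∈ (P ×ˢ P).filter (fun w => ¬ w.1 = w.2),
            (∑ i ∈ range (r - 1), (p ^ (i + 1) - p ^ i) *
              (if p ^ (i + 1) ∣ (w.1.1 - w.2.1).val ∧ p ^ (i + 1) ∣ (w.1.2 - w.2.2).val
                then 1 else 0)) := by
          rw [Finset.sum_add_distrib, Finset.sum_const, smul_eq_mul, mul_one]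
      _ ≤ oc + P.card * (p ^ (2 * r - 1) - p ^ r) := by
          apply Nat.add_le_add_left
          rw [Finset.sum_comm]
          -- bound each i-slice
          have hslice : ∀ i ∈ range (r - 1),
              ∑ w ∈ (P ×ˢ P).filter (fun w => ¬ w.1 = w.2),
                (p ^ (i + 1) - p ^ i) *
                (if p ^ (i + 1) ∣ (w.1.1 - w.2.1).val ∧ p ^ (i + 1) ∣ (w.1.2 - w.2.2).val
                  then 1 else 0)
              ≤ (p ^ (i + 1) - p ^ i) * (P.card * (p ^ (r - (i + 1)) * p ^ (r - (i + 1)))) := by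
            intro i hi
            rw [Finset.mem_range] at hi
            rw [← Finset.mul_sum]
            apply Nat.mul_le_mul_left
            -- sum of indicators = card of filter
            have hind : ∑ w ∈ (P ×ˢ P).filter (fun w => ¬ w.1 = w.2),
                (if p ^ (i + 1) ∣ (w.1.1 - w.2.1).val ∧ p ^ (i + 1) ∣ (w.1.2 - w.2.2).val
                  then 1 else 0)
                ≤ ((P ×ˢ P).filter (fun w =>
                    p ^ (i + 1) ∣ (w.1.1 - w.2.1).val ∧ p ^ (i + 1) ∣ (w.1.2 - w.2.2).val)).card := by
              rw [← Finset.sum_filter]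
              rw [Finset.filter_filter]
              rw [Finset.sum_const, smul_eq_mul, mul_one]
              apply Finset.card_le_card
              intro w hw
              rw [Finset.mem_filter] at hw ⊢
              exact ⟨hw.1, hw.2.2⟩
            refine le_trans hind ?_
            -- fiberwise over second coordinate
            rw [Finset.card_eq_sum_card_fiberwise
              (f := fun w : (ZMod (p ^ r) × ZMod (p ^ r)) × (ZMod (p ^ r) × ZMod (p ^ r)) => w.2)
              (t := P) (fun w hw => (Finset.mem_product.mp (Finset.mem_filter.mp hw).1).2)]
            calc ∑ v ∈ P, (((P ×ˢ P).filter (fun w =>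
                    p ^ (i + 1) ∣ (w.1.1 - w.2.1).val ∧ p ^ (i + 1) ∣ (w.1.2 - w.2.2).val)).filter
                    (fun w => w.2 = v)).card
                ≤ ∑ v ∈ P, p ^ (r - (i + 1)) * p ^ (r - (i + 1)) := by
                  apply Finset.sum_le_sum
                  intro v hv
                  have h2D := twoD (p := p) (r := r) hp0 (i := i + 1) (by omega) v
                  refine le_trans ?_ h2D
                  apply Finset.card_le_card_of_injOn (fun w => w.1)
                  · intro w hw
                    simp only [Finset.mem_coe, mem_filter, mem_univ, true_and] at hw ⊢
                    obtain ⟨⟨_, hcond⟩, hv2⟩ := hw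
                    rw [← hv2]
                    exact hcond
                  · intro w hw w' hw' h
                    rw [Finset.mem_coe, Finset.mem_filter] at hw hw'
                    exact Prod.ext h (by rw [hw.2, hw'.2])
              _ = P.card * (p ^ (r - (i + 1)) * p ^ (r - (i + 1))) := by
                  rw [Finset.sum_const, smul_eq_mul]
          calc ∑ i ∈ range (r - 1), ∑ w ∈ (P ×ˢ P).filter (fun w => ¬ w.1 = w.2),
                (p ^ (i + 1) - p ^ i) *
                (if p ^ (i + 1) ∣ (w.1.1 - w.2.1).val ∧ p ^ (i + 1) ∣ (w.1.2 - w.2.2).val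
                  then 1 else 0)
              ≤ ∑ i ∈ range (r - 1),
                  (p ^ (i + 1) - p ^ i) * (P.card * (p ^ (r - (i + 1)) * p ^ (r - (i + 1)))) :=
                Finset.sum_le_sum hslice
            _ = P.card * ∑ i ∈ range (r - 1),
                  (p ^ (2 * r - 1 - i) - p ^ (2 * r - 1 - (i + 1))) := by
                rw [Finset.mul_sum]
                apply Finset.sum_congr rfl
                intro i hi
                rw [Finset.mem_range] at hi
                have e1 : p ^ (i + 1) * (p ^ (r - (i + 1)) * p ^ (r - (i + 1)))
                    = p ^ (2 * r - 1 - i) := by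
                  rw [← pow_add, ← pow_add]; congr 1; omega
                have e2 : p ^ i * (p ^ (r - (i + 1)) * p ^ (r - (i + 1)))
                    = p ^ (2 * r - 1 - (i + 1)) := by
                  rw [← pow_add, ← pow_add]; congr 1; omega
                have key : (p ^ (i + 1) - p ^ i) * (p ^ (r - (i + 1)) * p ^ (r - (i + 1)))
                    = p ^ (2 * r - 1 - i) - p ^ (2 * r - 1 - (i + 1)) := by
                  rw [Nat.sub_mul, e1, e2]
                calc (p ^ (i + 1) - p ^ i) * (P.card * (p ^ (r - (i + 1)) * p ^ (r - (i + 1))))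
                    = P.card * ((p ^ (i + 1) - p ^ i) * (p ^ (r - (i + 1)) * p ^ (r - (i + 1)))) := by
                      ring
                  _ = P.card * (p ^ (2 * r - 1 - i) - p ^ (2 * r - 1 - (i + 1))) := by rw [key]
            _ = P.card * (p ^ (2 * r - 1) - p ^ r) := by
                congr 1
                have := tele_dec (fun i => p ^ (2 * r - 1 - i))
                  (fun i => Nat.pow_le_pow_right hp0 (by omega)) (r - 1)
                rw [this]
                congr 2
                omega
  -- combine
  have hdcle : dc ≤ P.card := by
    apply Finset.card_le_card_of_injOn (fun w => w.1)
    · intro w hw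
      simp only [Finset.mem_coe, mem_filter, mem_product] at hw
      exact hw.1.1
    · intro w hw w' hw' h
      rw [Finset.mem_coe, Finset.mem_filter] at hw hw'
      exact Prod.ext h (by rw [← hw.2, ← hw'.2]; exact h)
  have hocle : oc ≤ P.card ^ 2 := by
    calc oc ≤ (P ×ˢ P).card := Finset.card_le_card (Finset.filter_subset _ _)
      _ = P.card * P.card := Finset.card_product _ _
      _ = P.card ^ 2 := (sq P.card).symm
  have hXY : p ^ r ≤ p ^ (2 * r - 1) := Nat.pow_le_pow_right hp0 (by omega)
  refine le_trans (Nat.add_le_add hdiag hoff) ?_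
  have hsub : P.card * (p ^ (2 * r - 1) - p ^ r)
      = P.card * p ^ (2 * r - 1) - P.card * p ^ r := mul_tsub _ _ _
  rw [hsub]
  have h1 : P.card * p ^ r ≤ P.card * p ^ (2 * r - 1) := Nat.mul_le_mul_left _ hXY
  have h2 : p ^ r * P.card = P.card * p ^ r := Nat.mul_comm _ _
  have h3 : p ^ (2 * r - 1) * P.card = P.card * p ^ (2 * r - 1) := Nat.mul_comm _ _
  have h4 : p ^ r * dc ≤ p ^ r * P.card := Nat.mul_le_mul_left _ hdcle
  omega

/-- divisibility of val is preserved by addition -/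
lemma dvd_val_add {p r : ℕ} [NeZero (p ^ r)] (hr : 1 ≤ r) {x y : ZMod (p ^ r)}
    (hx : p ∣ x.val) (hy : p ∣ y.val) : p ∣ (x + y).val := by
  rw [ZMod.val_add]
  rw [Nat.dvd_mod_iff (dvd_pow_self p (by omega : r ≠ 0))]
  exact Nat.dvd_add hx hy

/-- zero-divisor cancellation against a unit -/
lemma key_cancel {p r : ℕ} [NeZero (p ^ r)] (hp : p.Prime)
    (a b : ZMod (p ^ r)) (hab : a * b = 0) (hb : ¬ p ∣ b.val) : a = 0 := by
  rw [mul_eq_zero_iff_val] at hab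
  have hcop : Nat.Coprime (p ^ r) b.val :=
    Nat.Coprime.pow_left _ (hp.coprime_iff_not_dvd.mpr hb)
  have hdvd : p ^ r ∣ a.val := hcop.dvd_of_dvd_mul_right hab
  have h0 : a.val = 0 := Nat.eq_zero_of_dvd_of_lt hdvd (ZMod.val_lt _)
  exact ZMod.val_injective _ (by simpa using h0)

/-- square roots of units: x² = y² implies y = ±x -/
lemma sq_eq {p r : ℕ} [NeZero (p ^ r)] (hp : p.Prime) (hodd : Odd p) (hr : 1 ≤ r)
    {x y : ZMod (p ^ r)} (hx : ¬ p ∣ x.val)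
    (h : x ^ 2 = y ^ 2) : y = x ∨ y = -x := by
  have hprod : (x - y) * (x + y) = 0 := by linear_combination h
  have hnot : ¬ (p ∣ (x - y).val ∧ p ∣ (x + y).val) := by
    rintro ⟨h1, h2⟩
    have h3 : p ∣ ((x - y) + (x + y)).val := dvd_val_add hr h1 h2
    have h4 : (x - y) + (x + y) = x + x := by ring
    rw [h4] at h3
    rw [ZMod.val_add, Nat.dvd_mod_iff (dvd_pow_self p (by omega : r ≠ 0))] at h3
    rcases (Nat.Prime.dvd_mul hp).mp (by rwa [← Nat.two_mul] at h3) with h5 | h5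
    · rcases hodd with ⟨k, hk⟩
      have h6 : p ≤ 2 := Nat.le_of_dvd (by norm_num) h5
      have h7 : 2 ≤ p := hp.two_le
      omega
    · exact hx h5
  rcases not_and_or.mp hnot with h1 | h1
  · have hcomm : (x + y) * (x - y) = 0 := by linear_combination hprod
    have h0 := key_cancel hp _ _ hcomm h1
    right
    exact eq_neg_of_add_eq_zero_right h0
  · have h0 := key_cancel hp _ _ hprod h1
    left
    exact (sub_eq_zero.mp h0).symm

/-- the image of squares has size at least |A|/4 -/
lemma sq_card {p r : ℕ} [NeZero (p ^ r)] (hp : p.Prime) (hodd : Odd p) (hr : 1 ≤ r)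
    (A : Finset (ZMod (p ^ r))) (hA : 2 * p ^ (r - 1) ≤ A.card) :
    A.card ≤ 4 * (A.image (fun a => a ^ 2)).card := by
  classical
  have hp0 : 0 < p := hp.pos
  set Au := A.filter (fun x => ¬ p ∣ x.val) with hAu
  -- |A \ Au| ≤ p^(r-1)
  have h1 : (A.filter (fun x => p ∣ x.val)).card ≤ p ^ (r - 1) := by
    have hone := oneD (p := p) (r := r) hp0 (i := 1) (by omega) (0 : ZMod (p ^ r))
    refine le_trans ?_ hone
    apply Finset.card_le_card
    intro x hx
    rw [Finset.mem_filter] at hx ⊢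
    refine ⟨Finset.mem_univ _, ?_⟩
    rw [sub_zero, pow_one]
    exact hx.2
  have h2 : (A.filter (fun x => p ∣ x.val)).card + Au.card = A.card := by
    rw [hAu]
    exact Finset.card_filter_add_card_filter_not (s := A) (p := fun x : ZMod (p ^ r) => p ∣ x.val)
  -- fibers of squaring on Au have size ≤ 2
  have h3 : Au.card ≤ 2 * (Au.image (fun a => a ^ 2)).card := by
    apply Finset.card_le_mul_card_image
    intro b hb
    rw [Finset.mem_image] at hb
    obtain ⟨x0, hx0, rfl⟩ := hb
    have hx0u : ¬ p ∣ x0.val := (Finset.mem_filter.mp hx0).2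
    have hsub : Au.filter (fun a => a ^ 2 = x0 ^ 2) ⊆ {x0, -x0} := by
      intro y hy
      rw [Finset.mem_filter] at hy
      rcases sq_eq hp hodd hr hx0u hy.2.symm with h | h
      · simp [h]
      · simp [h]
    calc (Au.filter (fun a => a ^ 2 = x0 ^ 2)).card ≤ ({x0, -x0} : Finset _).card :=
          Finset.card_le_card hsub
      _ ≤ 2 := Finset.card_insert_le _ _ |>.trans (by simp)
  have h4 : (Au.image (fun a => a ^ 2)).card ≤ (A.image (fun a => a ^ 2)).card := by
    apply Finset.card_le_card
    apply Finset.image_subset_image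
    exact Finset.filter_subset _ _
  omega



end SP19

open SP19

set_option maxHeartbeats 1000000

theorem stmt_19 :
    ∃ c : ℝ, 0 < c ∧
      ∀ (p r : ℕ), p.Prime → Odd p → 1 ≤ r →
        ∀ A : Finset (ZMod (p ^ r)), 2 * p ^ (r - 1) ≤ A.card →
          c * min ((p : ℝ) ^ ((r : ℝ) / 2) * (A.card : ℝ) ^ ((1 : ℝ) / 2))
              ((A.card : ℝ) ^ 2 / (p : ℝ) ^ ((2 * (r : ℝ) - 1) / 2))
            ≤ max (((A + A).card : ℝ))
                ((((A.image fun a => a ^ 2) + (A.image fun a => a ^ 2)).card : ℝ)) := by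
  classical
  refine ⟨1/4, by norm_num, ?_⟩
  intro p r hp hodd hr A hA
  haveI : NeZero (p ^ r) := ⟨(pow_pos hp.pos r).ne'⟩
  have hp0 : 0 < p := hp.pos
  set S : Finset (ZMod (p ^ r)) := A + A with hS
  set Sq : Finset (ZMod (p ^ r)) := A.image (fun a => a ^ 2) with hSq
  set E : Finset (ZMod (p ^ r)) := Sq + Sq with hE
  -- the point set
  set P : Finset (ZMod (p ^ r) × ZMod (p ^ r)) :=
    (S ×ˢ E).image (fun st => (st.1, st.2 - st.1 ^ 2)) with hP
  have hPcard : P.card = S.card * E.card := by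
    rw [hP]
    rw [Finset.card_image_of_injective _ ?inj, Finset.card_product]
    case inj =>
      intro u v huv
      simp only [Prod.mk.injEq] at huv
      obtain ⟨h1, h2⟩ := huv
      rw [h1] at h2
      exact Prod.ext h1 (by linear_combination h2)
  -- the line set
  have h2u : IsUnit (2 : ZMod (p ^ r)) := by
    have := (ZMod.isUnit_iff_coprime 2 (p ^ r)).mpr (Nat.coprime_two_left.mpr hodd.pow)
    simpa using this
  set L : Finset (ZMod (p ^ r) × ZMod (p ^ r)) :=
    (A ×ˢ Sq).image (fun bβ => (-(2 * bβ.1), bβ.2 + bβ.1 ^ 2)) with hL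
  have hinjL : ∀ x ∈ A ×ˢ Sq, ∀ y ∈ A ×ˢ Sq,
      (fun bβ : ZMod (p^r) × ZMod (p^r) => (-(2 * bβ.1), bβ.2 + bβ.1 ^ 2)) x
        = (fun bβ => (-(2 * bβ.1), bβ.2 + bβ.1 ^ 2)) y → x = y := by
    intro x _ y _ hxy
    simp only [Prod.mk.injEq] at hxy
    have h1 : x.1 = y.1 := h2u.mul_left_cancel (neg_inj.mp hxy.1)
    refine Prod.ext h1 ?_
    have := hxy.2
    rw [h1] at this
    exact add_right_cancel this
  have hLcard : L.card = A.card * Sq.card := by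
    rw [hL, Finset.card_image_of_injOn, Finset.card_product]
    intro x hx y hy hxy
    exact hinjL x (by simpa using hx) y (by simpa using hy) hxy
  -- incidence count lower bound
  have Ilow : A.card * Sq.card * A.card
      ≤ ∑ ℓ ∈ L, (P.filter (fun pt => pt.2 - ℓ.1 * pt.1 = ℓ.2)).card := by
    rw [hL, Finset.sum_image hinjL]
    have hper : ∀ bβ ∈ A ×ˢ Sq, A.card ≤
        (P.filter (fun pt => pt.2 - (-(2 * bβ.1)) * pt.1 = bβ.2 + bβ.1 ^ 2)).card := by
      rintro ⟨b, β⟩ hbβ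
      rw [Finset.mem_product] at hbβ
      obtain ⟨hb, hβ⟩ := hbβ
      apply Finset.card_le_card_of_injOn
        (fun c => (b + c, (β + c ^ 2) - (b + c) ^ 2))
      · intro c hc
        rw [Finset.mem_coe, Finset.mem_filter]
        constructor
        · rw [hP, Finset.mem_image]
          refine ⟨(b + c, β + c ^ 2), ?_, rfl⟩
          rw [Finset.mem_product]
          exact ⟨Finset.add_mem_add hb hc,
            Finset.add_mem_add hβ (Finset.mem_image_of_mem _ hc)⟩
        · show (β + c ^ 2) - (b + c) ^ 2 - (-(2 * b)) * (b + c) = β + b ^ 2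
          ring
      · intro c _ c' _ hcc
        have : b + c = b + c' := congrArg Prod.fst hcc
        exact add_left_cancel this
    calc A.card * Sq.card * A.card = ∑ _bβ ∈ A ×ˢ Sq, A.card := by
          rw [Finset.sum_const, smul_eq_mul, Finset.card_product]
      _ ≤ _ := Finset.sum_le_sum hper
  -- total count over all (m,k)
  have sumAll : ∑ mk ∈ (univ : Finset (ZMod (p ^ r) × ZMod (p ^ r))),
      (P.filter (fun pt => pt.2 - mk.1 * pt.1 = mk.2)).card = p ^ r * P.card := by
    rw [← Finset.univ_product_univ, Finset.sum_product]
    have hm : ∀ m ∈ (univ : Finset (ZMod (p ^ r))),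
        ∑ k ∈ (univ : Finset (ZMod (p ^ r))),
          (P.filter (fun pt => pt.2 - m * pt.1 = k)).card = P.card := by
      intro m _
      exact (Finset.card_eq_sum_card_fiberwise
        (f := fun pt : ZMod (p^r) × ZMod (p^r) => pt.2 - m * pt.1)
        (t := univ) (fun x _ => mem_univ _)).symm
    rw [Finset.sum_congr rfl hm, Finset.sum_const, smul_eq_mul, Finset.card_univ, ZMod.card]
  have hKB := KB hp hr P
  -- pass to real numbers
  set a : ℝ := (A.card : ℝ) with ha_def
  set s : ℝ := (Sq.card : ℝ) with hs_def
  set DD : ℝ := (S.card : ℝ) with hDD_def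
  set EE : ℝ := (E.card : ℝ) with hEE_def
  set M : ℝ := max DD EE with hM_def
  set Q : ℝ := ((p : ℝ)) ^ r with hQ_def
  set Y : ℝ := ((p : ℝ)) ^ (2 * r - 1) with hY_def
  have hp0R : (0 : ℝ) < p := by exact_mod_cast hp0
  have hQ0 : (0 : ℝ) < Q := by positivity
  have hY0 : (0 : ℝ) < Y := by positivity
  have hA0 : 0 < A.card := by
    have h2 : 0 < 2 * p ^ (r - 1) := by positivity
    omega
  have ha0 : (0 : ℝ) < a := by rw [ha_def]; exact_mod_cast hA0
  have h4s : A.card ≤ 4 * Sq.card := by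
    have := sq_card hp hodd hr A hA
    rw [hSq]
    exact this
  have hSq0 : 0 < Sq.card := by omega
  have hs0 : (0 : ℝ) < s := by rw [hs_def]; exact_mod_cast hSq0
  have has : a ≤ 4 * s := by
    rw [ha_def, hs_def]
    exact_mod_cast h4s
  have hDDM : DD ≤ M := le_max_left _ _
  have hEEM : EE ≤ M := le_max_right _ _
  have hDD0 : (0 : ℝ) ≤ DD := by rw [hDD_def]; exact Nat.cast_nonneg _
  have hEE0 : (0 : ℝ) ≤ EE := by rw [hEE_def]; exact Nat.cast_nonneg _
  have hM0 : (0 : ℝ) ≤ M := le_trans hDD0 hDDM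
  -- real incidence bound via Cauchy-Schwarz
  set n : ZMod (p ^ r) × ZMod (p ^ r) → ℕ :=
    fun mk => (P.filter (fun pt => pt.2 - mk.1 * pt.1 = mk.2)).card with hn_def
  set Pc : ℝ := (P.card : ℝ) with hPc_def
  have hPc0 : (0 : ℝ) ≤ Pc := by rw [hPc_def]; exact Nat.cast_nonneg _
  have hPcDE : Pc = DD * EE := by
    rw [hPc_def, hPcard]; push_cast; rfl
  have hsum1 : ∑ mk ∈ (univ : Finset (ZMod (p ^ r) × ZMod (p ^ r))), (n mk : ℝ)
      = Q * Pc := by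
    rw [← Nat.cast_sum]
    rw [sumAll]
    push_cast [hQ_def, hPc_def]
    ring
  have hsum2 : ∑ mk ∈ (univ : Finset (ZMod (p ^ r) × ZMod (p ^ r))), ((n mk : ℝ)) ^ 2
      ≤ Pc ^ 2 + Y * Pc := by
    rw [hPc_def, hY_def]
    exact_mod_cast hKB
  have hcardU : ((Fintype.card (ZMod (p ^ r) × ZMod (p ^ r)) : ℕ) : ℝ) = Q * Q := by
    rw [Fintype.card_prod, ZMod.card]
    push_cast [hQ_def]
    ring
  -- variance bound
  have hvar : ∑ mk ∈ (univ : Finset (ZMod (p ^ r) × ZMod (p ^ r))),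
      ((n mk : ℝ) - Pc / Q) ^ 2 ≤ Y * Pc := by
    have hexpand : ∀ mk : ZMod (p ^ r) × ZMod (p ^ r),
        ((n mk : ℝ) - Pc / Q) ^ 2
          = (n mk : ℝ) ^ 2 - 2 * (Pc / Q) * (n mk : ℝ) + (Pc / Q) ^ 2 := by
      intro mk; ring
    rw [Finset.sum_congr rfl (fun mk _ => hexpand mk)]
    rw [Finset.sum_add_distrib, Finset.sum_sub_distrib, ← Finset.mul_sum, hsum1,
      Finset.sum_const, Finset.card_univ, nsmul_eq_mul, hcardU]
    have e1 : 2 * (Pc / Q) * (Q * Pc) = 2 * Pc ^ 2 := by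
      field_simp
    have e2 : Q * Q * (Pc / Q) ^ 2 = Pc ^ 2 := by
      field_simp
    rw [e1, e2]
    linarith [hsum2]
  -- Cauchy–Schwarz over L
  set Lc : ℝ := (L.card : ℝ) with hLc_def
  have hLcas : Lc = a * s := by
    rw [hLc_def, hLcard]; push_cast; rfl
  have hIlow : a * s * a ≤ ∑ ℓ ∈ L, (n ℓ : ℝ) := by
    rw [← Nat.cast_sum, ha_def, hs_def]
    exact_mod_cast Ilow
  have hCS : ∑ ℓ ∈ L, (n ℓ : ℝ) ≤ Lc * (Pc / Q) + Real.sqrt (Lc * (Y * Pc)) := by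
    have hsplit : ∑ ℓ ∈ L, (n ℓ : ℝ)
        = (∑ ℓ ∈ L, ((n ℓ : ℝ) - Pc / Q)) + Lc * (Pc / Q) := by
      rw [Finset.sum_sub_distrib, Finset.sum_const, nsmul_eq_mul, hLc_def]
      ring
    rw [hsplit]
    have hg2 : ∑ ℓ ∈ L, ((n ℓ : ℝ) - Pc / Q) ^ 2 ≤ Y * Pc := by
      refine le_trans ?_ hvar
      apply Finset.sum_le_sum_of_subset_of_nonneg (Finset.subset_univ L)
      intro i _ _
      exact sq_nonneg _
    have hcs0 : (∑ ℓ ∈ L, (1 : ℝ) * ((n ℓ : ℝ) - Pc / Q)) ^ 2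
        ≤ (∑ ℓ ∈ L, (1 : ℝ) ^ 2) * (∑ ℓ ∈ L, ((n ℓ : ℝ) - Pc / Q) ^ 2) :=
      Finset.sum_mul_sq_le_sq_mul_sq L _ _
    simp only [one_mul, one_pow, Finset.sum_const, nsmul_eq_mul, mul_one] at hcs0
    have h2 : (∑ ℓ ∈ L, ((n ℓ : ℝ) - Pc / Q)) ^ 2 ≤ Lc * (Y * Pc) := by
      refine le_trans hcs0 ?_
      rw [hLc_def]
      exact mul_le_mul_of_nonneg_left hg2 (Nat.cast_nonneg _)
    have h1 : (∑ ℓ ∈ L, ((n ℓ : ℝ) - Pc / Q)) ≤ Real.sqrt (Lc * (Y * Pc)) := by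
      calc (∑ ℓ ∈ L, ((n ℓ : ℝ) - Pc / Q))
          ≤ |∑ ℓ ∈ L, ((n ℓ : ℝ) - Pc / Q)| := le_abs_self _
        _ = Real.sqrt ((∑ ℓ ∈ L, ((n ℓ : ℝ) - Pc / Q)) ^ 2) := (Real.sqrt_sq_eq_abs _).symm
        _ ≤ Real.sqrt (Lc * (Y * Pc)) := Real.sqrt_le_sqrt h2
    linarith
  have hPcM : Pc ≤ M * M := by
    rw [hPcDE]
    exact mul_le_mul hDDM hEEM hEE0 hM0
  have hmain : a * s * a ≤ (a * s) * ((M * M) / Q) + Real.sqrt ((a * s) * Y) * M := by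
    have t1 : Lc * (Pc / Q) ≤ (a * s) * ((M * M) / Q) := by
      rw [hLcas]
      apply mul_le_mul_of_nonneg_left _ (mul_nonneg ha0.le hs0.le)
      exact (div_le_div_iff_of_pos_right hQ0).mpr hPcM
    have hsqrtM : Real.sqrt ((a * s) * (Y * (M * M))) = Real.sqrt ((a * s) * Y) * M := by
      rw [show (a * s) * (Y * (M * M)) = ((a * s) * Y) * (M * M) by ring]
      rw [Real.sqrt_mul (by positivity)]
      rw [Real.sqrt_mul_self hM0]
    have t2 : Real.sqrt (Lc * (Y * Pc)) ≤ Real.sqrt ((a * s) * Y) * M := by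
      rw [← hsqrtM]
      apply Real.sqrt_le_sqrt
      rw [hLcas]
      calc (a * s) * (Y * Pc) = ((a * s) * Y) * Pc := by ring
        _ ≤ ((a * s) * Y) * (M * M) := by
            apply mul_le_mul_of_nonneg_left hPcM
            exact mul_nonneg (mul_nonneg ha0.le hs0.le) hY0.le
        _ = (a * s) * (Y * (M * M)) := by ring
    calc a * s * a ≤ ∑ ℓ ∈ L, (n ℓ : ℝ) := hIlow
      _ ≤ Lc * (Pc / Q) + Real.sqrt (Lc * (Y * Pc)) := hCS
      _ ≤ (a * s) * ((M * M) / Q) + Real.sqrt ((a * s) * Y) * M := add_le_add t1 t2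
  -- rpow identities
  have hT1 : (p : ℝ) ^ ((r : ℝ) / 2) * a ^ ((1 : ℝ) / 2) = Real.sqrt (Q * a) := by
    rw [Real.sqrt_mul hQ0.le]
    congr 1
    · rw [hQ_def, Real.sqrt_eq_rpow, ← Real.rpow_natCast (p : ℝ) r,
        ← Real.rpow_mul hp0R.le]
      congr 1
      ring
    · rw [Real.sqrt_eq_rpow]
  have hT2 : (p : ℝ) ^ ((2 * (r : ℝ) - 1) / 2) = Real.sqrt Y := by
    rw [hY_def, Real.sqrt_eq_rpow, ← Real.rpow_natCast (p : ℝ) (2 * r - 1),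
      ← Real.rpow_mul hp0R.le]
    congr 1
    have hc : ((2 * r - 1 : ℕ) : ℝ) = 2 * (r : ℝ) - 1 := by
      have h1 : (1 : ℕ) ≤ 2 * r := by omega
      push_cast [h1]
      ring
    rw [hc]
    ring
  have hsqY0 : (0 : ℝ) < Real.sqrt Y := Real.sqrt_pos.mpr hY0
  -- case analysis
  rcases le_or_gt (a * s * a / 2) ((a * s) * ((M * M) / Q)) with hcase | hcase
  · -- main term dominates: M² ≥ Qa/2, use T1
    have hQa : Q * a / 2 ≤ M * M := by
      have h' : a * s * a / 2 * Q ≤ (a * s) * (M * M) := by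
        have hc2 : a * s * a / 2 ≤ (a * s) * (M * M) / Q := by
          calc a * s * a / 2 ≤ (a * s) * ((M * M) / Q) := hcase
            _ = (a * s) * (M * M) / Q := by ring
        calc a * s * a / 2 * Q ≤ ((a * s) * (M * M) / Q) * Q :=
              mul_le_mul_of_nonneg_right hc2 hQ0.le
          _ = (a * s) * (M * M) := by field_simp
      have h'' : (Q * a / 2) * (a * s) ≤ (M * M) * (a * s) := by
        calc (Q * a / 2) * (a * s) = a * s * a / 2 * Q := by ring
          _ ≤ (a * s) * (M * M) := h'
          _ = (M * M) * (a * s) := by ring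
      exact le_of_mul_le_mul_right h'' (mul_pos ha0 hs0)
    have hQa0 : (0 : ℝ) ≤ Q * a := mul_nonneg hQ0.le ha0.le
    have hs1 : Real.sqrt (Q * a / 2) ≤ M := by
      have := Real.sqrt_le_sqrt hQa
      rwa [Real.sqrt_mul_self hM0] at this
    have h4eq : Real.sqrt (Q * a / 4) = Real.sqrt (Q * a) / 2 := by
      rw [show (Q * a / 4) = (Q * a) * (1 / 2) ^ 2 by ring, Real.sqrt_mul hQa0,
        Real.sqrt_sq (by norm_num : (0 : ℝ) ≤ 1 / 2)]
      ring
    have hs2 : Real.sqrt (Q * a) / 2 ≤ Real.sqrt (Q * a / 2) := by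
      rw [← h4eq]
      apply Real.sqrt_le_sqrt
      linarith
    have hminle : min ((p : ℝ) ^ ((r : ℝ) / 2) * a ^ ((1 : ℝ) / 2))
        (a ^ 2 / (p : ℝ) ^ ((2 * (r : ℝ) - 1) / 2)) ≤ Real.sqrt (Q * a) := by
      rw [← hT1]
      exact min_le_left _ _
    have hsqrtQa0 : (0 : ℝ) ≤ Real.sqrt (Q * a) := Real.sqrt_nonneg _
    calc (1 : ℝ) / 4 * min ((p : ℝ) ^ ((r : ℝ) / 2) * a ^ ((1 : ℝ) / 2))
          (a ^ 2 / (p : ℝ) ^ ((2 * (r : ℝ) - 1) / 2))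
        ≤ 1 / 4 * Real.sqrt (Q * a) := by
          have hmin0 : (0:ℝ) ≤ 1/4 := by norm_num
          exact mul_le_mul_of_nonneg_left hminle hmin0
      _ ≤ Real.sqrt (Q * a) / 2 := by linarith
      _ ≤ M := le_trans hs2 hs1
  · -- error term dominates: use T2
    have hZ : a * s * a / 2 ≤ Real.sqrt ((a * s) * Y) * M := by linarith
    have hsa : Real.sqrt a * Real.sqrt s ≤ 2 * s := by
      rw [← Real.sqrt_mul ha0.le]
      have hle : a * s ≤ (2 * s) ^ 2 := by nlinarith
      calc Real.sqrt (a * s) ≤ Real.sqrt ((2 * s) ^ 2) := Real.sqrt_le_sqrt hle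
        _ = 2 * s := Real.sqrt_sq (by linarith)
    have hW : Real.sqrt ((a * s) * Y) = Real.sqrt a * Real.sqrt s * Real.sqrt Y := by
      rw [Real.sqrt_mul (mul_nonneg ha0.le hs0.le), Real.sqrt_mul ha0.le]
    have hsqa0 : (0 : ℝ) < Real.sqrt a := Real.sqrt_pos.mpr ha0
    have hsqs0 : (0 : ℝ) < Real.sqrt s := Real.sqrt_pos.mpr hs0
    have hkey : 1 / 4 * (a ^ 2 / Real.sqrt Y)
        * (Real.sqrt a * Real.sqrt s * Real.sqrt Y) ≤ a * s * a / 2 := by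
      have e : 1 / 4 * (a ^ 2 / Real.sqrt Y) * (Real.sqrt a * Real.sqrt s * Real.sqrt Y)
          = 1 / 4 * a ^ 2 * (Real.sqrt a * Real.sqrt s) := by
        field_simp
      rw [e]
      calc 1 / 4 * a ^ 2 * (Real.sqrt a * Real.sqrt s)
          ≤ 1 / 4 * a ^ 2 * (2 * s) := by
            apply mul_le_mul_of_nonneg_left hsa
            exact mul_nonneg (by norm_num) (sq_nonneg a)
        _ = a * s * a / 2 := by ring
    have hfinal2 : 1 / 4 * (a ^ 2 / Real.sqrt Y) ≤ M := by
      have hW0 : (0 : ℝ) < Real.sqrt a * Real.sqrt s * Real.sqrt Y :=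
        mul_pos (mul_pos hsqa0 hsqs0) hsqY0
      apply le_of_mul_le_mul_right ?_ hW0
      calc 1 / 4 * (a ^ 2 / Real.sqrt Y) * (Real.sqrt a * Real.sqrt s * Real.sqrt Y)
          ≤ a * s * a / 2 := hkey
        _ ≤ Real.sqrt ((a * s) * Y) * M := hZ
        _ = M * (Real.sqrt a * Real.sqrt s * Real.sqrt Y) := by rw [hW]; ring
    have hminle : min ((p : ℝ) ^ ((r : ℝ) / 2) * a ^ ((1 : ℝ) / 2))
        (a ^ 2 / (p : ℝ) ^ ((2 * (r : ℝ) - 1) / 2)) ≤ a ^ 2 / Real.sqrt Y := by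
      rw [← hT2]
      exact min_le_right _ _
    calc (1 : ℝ) / 4 * min ((p : ℝ) ^ ((r : ℝ) / 2) * a ^ ((1 : ℝ) / 2))
          (a ^ 2 / (p : ℝ) ^ ((2 * (r : ℝ) - 1) / 2))
        ≤ 1 / 4 * (a ^ 2 / Real.sqrt Y) := by
          exact mul_le_mul_of_nonneg_left hminle (by norm_num)
      _ ≤ M := hfinal2
end
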